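/- arXiv:2512.02348 — 6 statements merged into one kernel-verified Lean document; each statement's English description precedes it below -/
import Mathlib

section
/- Let (g_i)_{i∈I} be a finite system of representatives for the left cosets of U'₁ in U', let (g'_j)_{j∈J} be a finite system of representatives for the left cosets of U''₁ in U'', and let (u_k)_{k∈K} be a system of representatives for the double cosets U'₂\U'/U'₁. Then for every v ∈ U', the number of pairs (i, j) ∈ I × J such that g'_j·g'·g_i·g·U = g'·v·g·U equals the sum of the indices [W_{u_k} : W'_{u_k}] over those k ∈ K with U''·g'·u_k·g·U = U''·g'·v·g·U. -/
open Pointwise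

/-- `W_c := U'' ∩ c·U·c⁻¹` for `c ∈ G`. -/
def Wgrp {G : Type*} [Group G] (U U'' : Subgroup G) (c : G) : Subgroup G :=
  U'' ⊓ Subgroup.map (MulAut.conj c).toMonoidHom U

section Aux
variable {G : Type*} [Group G]

lemma mem_Wgrp {U U'' : Subgroup G} {c x : G} :
    x ∈ Wgrp U U'' c ↔ x ∈ U'' ∧ c⁻¹ * x * c ∈ U := by
  simp only [Wgrp, Subgroup.mem_inf, Subgroup.mem_map, MulEquiv.coe_toMonoidHom,
    MulAut.conj_apply]
  constructor
  · rintro ⟨h1, y, hy, rfl⟩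
    refine ⟨h1, ?_⟩
    have : c⁻¹ * (c * y * c⁻¹) * c = y := by group
    rwa [this]
  · rintro ⟨h1, h2⟩
    exact ⟨h1, c⁻¹ * x * c, h2, by group⟩

lemma mem_conjmap {U' : Subgroup G} {g' x : G} :
    x ∈ Subgroup.map (MulAut.conj g').toMonoidHom U' ↔ g'⁻¹ * x * g' ∈ U' := by
  simp only [Subgroup.mem_map, MulEquiv.coe_toMonoidHom, MulAut.conj_apply]
  constructor
  · rintro ⟨y, hy, rfl⟩
    have : g'⁻¹ * (g' * y * g'⁻¹) * g' = y := by group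
    rwa [this]
  · intro h; exact ⟨g'⁻¹ * x * g', h, by group⟩

lemma doset_eq_of_rel (H K : Subgroup G) {x y h t : G} (hh : h ∈ H) (ht : t ∈ K)
    (hy : y = h * x * t) : (H : Set G) * {y} * K = (H : Set G) * {x} * K :=
  DoubleCoset.doubleCoset_eq_of_mem (H := H) (K := K) (DoubleCoset.mem_doubleCoset.2 ⟨h, hh, t, ht, hy⟩)

lemma rel_of_doset_eq {H K : Subgroup G} {x y : G}
    (hxy : (H : Set G) * {y} * K = (H : Set G) * {x} * K) :
    ∃ h ∈ (H : Set G), ∃ t ∈ (K : Set G), y = h * x * t := by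
  have h1 : y ∈ (H : Set G) * {y} * K := DoubleCoset.mem_doubleCoset_self H K y
  rw [hxy] at h1
  exact DoubleCoset.mem_doubleCoset.1 h1

end Aux

open scoped Classical in
/-- Double coset multiplication count: for `v ∈ U'`, the number of pairs `(i, j)` with
`g'_j·g'·g_i·g·U = g'·v·g·U` equals `Σ_k [W_{u_k} : W'_{u_k}]`, the sum over those double
coset representatives `u_k` with `U''·g'·u_k·g·U = U''·g'·v·g·U`. -/
theorem doset_product_count {G : Type*} [Group G] (U U' U'' : Subgroup G) (g g' : G)
    {I J K : Type*} [Fintype I] [Fintype J] [Fintype K]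
    (gi : I → G) (g'j : J → G) (u : K → G)
    (hgi : ∀ i, gi i ∈ U')
    (hgirep : ∀ x ∈ U', ∃! i : I, (gi i)⁻¹ * x ∈ U' ∧ g⁻¹ * ((gi i)⁻¹ * x) * g ∈ U)
    (hg'j : ∀ j, g'j j ∈ U'')
    (hg'jrep : ∀ x ∈ U'', ∃! j : J,
      (g'j j)⁻¹ * x ∈ U'' ∧ g'⁻¹ * ((g'j j)⁻¹ * x) * g' ∈ U')
    (hu : ∀ k, u k ∈ U')
    (hurep : ∀ x ∈ U', ∃! k : K, ∃ a b : G,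
      (a ∈ U' ∧ g' * a * g'⁻¹ ∈ U'') ∧ (b ∈ U' ∧ g⁻¹ * b * g ∈ U) ∧ x = a * u k * b)
    (hWfin : ∀ k : K,
      ((Wgrp U U'' (g' * u k * g)) ⊓ Subgroup.map (MulAut.conj g').toMonoidHom U').relIndex
        (Wgrp U U'' (g' * u k * g)) ≠ 0)
    (v : G) (hv : v ∈ U') :
    Nat.card {p : I × J //
        (g'j p.2 * g' * gi p.1 * g) • (U : Set G) = (g' * v * g) • (U : Set G)} =
      ∑ k : K,
        if (U'' : Set G) * ({g' * u k * g} : Set G) * (U : Set G) =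
            (U'' : Set G) * ({g' * v * g} : Set G) * (U : Set G)
        then ((Wgrp U U'' (g' * u k * g)) ⊓
            Subgroup.map (MulAut.conj g').toMonoidHom U').relIndex
          (Wgrp U U'' (g' * u k * g))
        else 0 := by
  classical
  choose fI hfI hfIu using hgirep
  choose fJ hfJ hfJu using hg'jrep
  choose fK hex hKu using hurep
  choose fa fb hQ using hex
  -- the key coset computation for a pair (i, j) in the counted set
  have main : ∀ (i : I) (j : J),
      (g'j j * g' * gi i * g) • (U : Set G) = (g' * v * g) • (U : Set G) →
      ((g'j j * (g' * fa (gi i) (hgi i) * g'⁻¹)) * (g' * u (fK (gi i) (hgi i)) * g)) • (U : Set G)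
        = (g' * v * g) • (U : Set G) := by
    intro i j hp
    set a := fa (gi i) (hgi i) with hadef
    set b := fb (gi i) (hgi i) with hbdef
    set k := fK (gi i) (hgi i) with hkdef
    obtain ⟨⟨ha1, ha2⟩, ⟨hb1, hb2⟩, heq⟩ := hQ (gi i) (hgi i)
    rw [← hp, leftCoset_eq_iff, heq]
    have hcalc : (g'j j * (g' * a * g'⁻¹) * (g' * u k * g))⁻¹ *
        (g'j j * g' * (a * u k * b) * g) = g⁻¹ * b * g := by group
    rw [hcalc]
    exact hb2
  -- the double coset of `g'·u_{k(i)}·g` matches that of `g'·v·g`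
  have condOf : ∀ (i : I) (j : J),
      (g'j j * g' * gi i * g) • (U : Set G) = (g' * v * g) • (U : Set G) →
      (U'' : Set G) * {g' * u (fK (gi i) (hgi i)) * g} * U =
        (U'' : Set G) * {g' * v * g} * U := by
    intro i j hp
    have h1 := main i j hp
    have h2 := (leftCoset_eq_iff U).1 h1
    have hε : g'j j * (g' * fa (gi i) (hgi i) * g'⁻¹) ∈ U'' :=
      mul_mem (hg'j j) ((hQ (gi i) (hgi i)).1.2)
    refine (doset_eq_of_rel U'' U hε h2 ?_).symm
    group
  -- split the count according to the double coset representative attached to `i`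
  have hsum : Nat.card {p : I × J //
        (g'j p.2 * g' * gi p.1 * g) • (U : Set G) = (g' * v * g) • (U : Set G)} =
      ∑ k : K, Nat.card {q : {p : I × J //
        (g'j p.2 * g' * gi p.1 * g) • (U : Set G) = (g' * v * g) • (U : Set G)} //
          fK (gi q.1.1) (hgi q.1.1) = k} := by
    simp only [Nat.card_eq_fintype_card]
    rw [← Fintype.card_sigma]
    exact Fintype.card_congr (Equiv.sigmaFiberEquiv _).symm
  rw [hsum]
  refine Finset.sum_congr rfl fun k _ => ?_
  by_cases hk : (U'' : Set G) * ({g' * u k * g} : Set G) * (U : Set G) =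
      (U'' : Set G) * ({g' * v * g} : Set G) * (U : Set G)
  · rw [if_pos hk]
    obtain ⟨ε0, hε0, t0, ht0, he0⟩ := rel_of_doset_eq hk.symm
    have hε0' : ε0 ∈ U'' := hε0
    have ht0' : t0 ∈ U := ht0
    have he0' : (ε0 * (g' * u k * g)) • (U : Set G) = (g' * v * g) • (U : Set G) := by
      rw [leftCoset_eq_iff, he0]
      have e : (ε0 * (g' * u k * g))⁻¹ * (ε0 * (g' * u k * g) * t0) = t0 := by group
      rw [e]; exact ht0'
    have mainW : ∀ q : {q : {p : I × J //
        (g'j p.2 * g' * gi p.1 * g) • (U : Set G) = (g' * v * g) • (U : Set G)} //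
          fK (gi q.1.1) (hgi q.1.1) = k},
        ((g'j q.1.1.2 * (g' * fa (gi q.1.1.1) (hgi q.1.1.1) * g'⁻¹)) * (g' * u k * g)) • (U : Set G)
          = (g' * v * g) • (U : Set G) := by
      intro q
      have h1 := main q.1.1.1 q.1.1.2 q.1.2
      rwa [q.2] at h1
    have hWmem : ∀ q : {q : {p : I × J //
        (g'j p.2 * g' * gi p.1 * g) • (U : Set G) = (g' * v * g) • (U : Set G)} //
          fK (gi q.1.1) (hgi q.1.1) = k},
        ε0⁻¹ * (g'j q.1.1.2 * (g' * fa (gi q.1.1.1) (hgi q.1.1.1) * g'⁻¹))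
          ∈ Wgrp U U'' (g' * u k * g) := by
      intro q
      rw [mem_Wgrp]
      refine ⟨mul_mem (inv_mem hε0') (mul_mem (hg'j _) ((hQ (gi q.1.1.1) (hgi q.1.1.1)).1.2)), ?_⟩
      have h1 := (leftCoset_eq_iff U).1 (he0'.trans (mainW q).symm)
      have e : (ε0 * (g' * u k * g))⁻¹ *
          ((g'j q.1.1.2 * (g' * fa (gi q.1.1.1) (hgi q.1.1.1) * g'⁻¹)) * (g' * u k * g)) =
          (g' * u k * g)⁻¹ *
            (ε0⁻¹ * (g'j q.1.1.2 * (g' * fa (gi q.1.1.1) (hgi q.1.1.1) * g'⁻¹))) *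
            (g' * u k * g) := by group
      rwa [e] at h1
    have hrel : ((Wgrp U U'' (g' * u k * g)) ⊓
        Subgroup.map (MulAut.conj g').toMonoidHom U').relIndex (Wgrp U U'' (g' * u k * g)) =
        Nat.card ((Wgrp U U'' (g' * u k * g)) ⧸ ((Wgrp U U'' (g' * u k * g)) ⊓
          Subgroup.map (MulAut.conj g').toMonoidHom U').subgroupOf
            (Wgrp U U'' (g' * u k * g))) := rfl
    rw [hrel]
    refine Nat.card_eq_of_bijective
      (fun q => QuotientGroup.mk ⟨_, hWmem q⟩) ⟨?_, ?_⟩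
    · -- injectivity
      rintro ⟨⟨⟨i1, j1⟩, hp1⟩, hk1⟩ ⟨⟨⟨i2, j2⟩, hp2⟩, hk2⟩ hq
      rw [QuotientGroup.eq, Subgroup.mem_subgroupOf] at hq
      simp only [Subgroup.coe_mul, InvMemClass.coe_inv] at hq
      obtain ⟨⟨ha11, ha12⟩, ⟨hb11, hb12⟩, heq1⟩ := hQ (gi i1) (hgi i1)
      obtain ⟨⟨ha21, ha22⟩, ⟨hb21, hb22⟩, heq2⟩ := hQ (gi i2) (hgi i2)
      rw [hk1] at heq1
      rw [hk2] at heq2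
      set a1 := fa (gi i1) (hgi i1) with ha1def
      set a2 := fa (gi i2) (hgi i2) with ha2def
      set b1 := fb (gi i1) (hgi i1) with hb1def
      set b2 := fb (gi i2) (hgi i2) with hb2def
      have hm : (g'j j1 * (g' * a1 * g'⁻¹))⁻¹ * (g'j j2 * (g' * a2 * g'⁻¹)) ∈
          Wgrp U U'' (g' * u k * g) ⊓ Subgroup.map (MulAut.conj g').toMonoidHom U' := by
        have e : (ε0⁻¹ * (g'j j1 * (g' * a1 * g'⁻¹)))⁻¹ * (ε0⁻¹ * (g'j j2 * (g' * a2 * g'⁻¹))) =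
            (g'j j1 * (g' * a1 * g'⁻¹))⁻¹ * (g'j j2 * (g' * a2 * g'⁻¹)) := by group
        rwa [e] at hq
      rw [Subgroup.mem_inf, mem_Wgrp, mem_conjmap] at hm
      obtain ⟨⟨hm1, hm2⟩, hm3⟩ := hm
      have hj : j1 = j2 := by
        have m1 : (g'j j1)⁻¹ * g'j j2 ∈ U'' := by
          have e : (g'j j1)⁻¹ * g'j j2 =
              (g' * a1 * g'⁻¹) *
                ((g'j j1 * (g' * a1 * g'⁻¹))⁻¹ * (g'j j2 * (g' * a2 * g'⁻¹))) *
                (g' * a2 * g'⁻¹)⁻¹ := by group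
          rw [e]; exact mul_mem (mul_mem ha12 hm1) (inv_mem ha22)
        have m2 : g'⁻¹ * ((g'j j1)⁻¹ * g'j j2) * g' ∈ U' := by
          have e : g'⁻¹ * ((g'j j1)⁻¹ * g'j j2) * g' =
              a1 * (g'⁻¹ *
                ((g'j j1 * (g' * a1 * g'⁻¹))⁻¹ * (g'j j2 * (g' * a2 * g'⁻¹))) * g') *
                a2⁻¹ := by group
          rw [e]; exact mul_mem (mul_mem ha11 hm3) (inv_mem ha21)
        have e1 : j1 = fJ (g'j j2) (hg'j j2) := hfJu _ _ j1 ⟨m1, m2⟩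
        have e2 : j2 = fJ (g'j j2) (hg'j j2) :=
          hfJu _ _ j2 ⟨by simpa using one_mem U'', by simpa using one_mem U'⟩
        exact e1.trans e2.symm
      subst hj
      have hcc1 : a1⁻¹ * a2 ∈ U' := by
        have e : g'⁻¹ * ((g'j j1 * (g' * a1 * g'⁻¹))⁻¹ * (g'j j1 * (g' * a2 * g'⁻¹))) * g' =
            a1⁻¹ * a2 := by group
        rw [← e]; exact hm3
      have hd2 : g⁻¹ * ((u k)⁻¹ * (a1⁻¹ * a2) * u k) * g ∈ U := by
        have e : g⁻¹ * ((u k)⁻¹ * (a1⁻¹ * a2) * u k) * g =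
            (g' * u k * g)⁻¹ *
              ((g'j j1 * (g' * a1 * g'⁻¹))⁻¹ * (g'j j1 * (g' * a2 * g'⁻¹))) *
              (g' * u k * g) := by group
        rw [e]; exact hm2
      have hi : i1 = i2 := by
        have key : (gi i1)⁻¹ * gi i2 = b1⁻¹ * ((u k)⁻¹ * (a1⁻¹ * a2) * u k) * b2 := by
          rw [heq1, heq2]; group
        have m1 : (gi i1)⁻¹ * gi i2 ∈ U' := by
          rw [key]
          exact mul_mem (mul_mem (inv_mem hb11)
            (mul_mem (mul_mem (inv_mem (hu k)) hcc1) (hu k))) hb21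
        have m2 : g⁻¹ * ((gi i1)⁻¹ * gi i2) * g ∈ U := by
          have e : g⁻¹ * ((gi i1)⁻¹ * gi i2) * g =
              (g⁻¹ * b1 * g)⁻¹ * (g⁻¹ * ((u k)⁻¹ * (a1⁻¹ * a2) * u k) * g) *
                (g⁻¹ * b2 * g) := by
            rw [key]; group
          rw [e]; exact mul_mem (mul_mem (inv_mem hb12) hd2) hb22
        have e1 : i1 = fI (gi i2) (hgi i2) := hfIu _ _ i1 ⟨m1, m2⟩
        have e2 : i2 = fI (gi i2) (hgi i2) :=
          hfIu _ _ i2 ⟨by simpa using one_mem U', by simpa using one_mem U⟩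
        exact e1.trans e2.symm
      apply Subtype.ext
      apply Subtype.ext
      show (i1, _) = (i2, _)
      rw [hi]
    · -- surjectivity
      intro y
      obtain ⟨w, rfl⟩ := QuotientGroup.mk_surjective y
      obtain ⟨hw1, hw2⟩ := mem_Wgrp.1 w.2
      have hε'' : ε0 * (w : G) ∈ U'' := mul_mem hε0' hw1
      obtain ⟨hJ1, hJ2⟩ := hfJ (ε0 * (w : G)) hε''
      set jx := fJ (ε0 * (w : G)) hε'' with hjxdef
      set a := g'⁻¹ * ((g'j jx)⁻¹ * (ε0 * (w : G))) * g' with hadef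
      have ha1 : a ∈ U' := hJ2
      have ha2 : g' * a * g'⁻¹ ∈ U'' := by
        have e : g' * a * g'⁻¹ = (g'j jx)⁻¹ * (ε0 * (w : G)) := by rw [hadef]; group
        rw [e]; exact hJ1
      have hx' : a * u k ∈ U' := mul_mem ha1 (hu k)
      obtain ⟨hI1, hI2⟩ := hfI (a * u k) hx'
      set ix := fI (a * u k) hx' with hixdef
      set b := (a * u k)⁻¹ * gi ix with hbdef
      have hb1 : b ∈ U' := by
        have e : b = ((gi ix)⁻¹ * (a * u k))⁻¹ := by rw [hbdef]; group
        rw [e]; exact inv_mem hI1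
      have hb2 : g⁻¹ * b * g ∈ U := by
        have e : g⁻¹ * b * g = (g⁻¹ * ((gi ix)⁻¹ * (a * u k)) * g)⁻¹ := by rw [hbdef]; group
        rw [e]; exact inv_mem hI2
      have heqx : gi ix = a * u k * b := by rw [hbdef]; group
      have hεeq : g'j jx * (g' * a * g'⁻¹) = ε0 * (w : G) := by rw [hadef]; group
      have hp : (g'j jx * g' * gi ix * g) • (U : Set G) = (g' * v * g) • (U : Set G) := by
        have s1 : (ε0 * (w : G) * (g' * u k * g)) • (U : Set G) =
            (ε0 * (g' * u k * g)) • (U : Set G) := by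
          rw [leftCoset_eq_iff]
          have e : (ε0 * (w : G) * (g' * u k * g))⁻¹ * (ε0 * (g' * u k * g)) =
              ((g' * u k * g)⁻¹ * (w : G) * (g' * u k * g))⁻¹ := by group
          rw [e]; exact inv_mem hw2
        have s2 : (ε0 * (w : G) * (g' * u k * g)) • (U : Set G) =
            (g'j jx * g' * gi ix * g) • (U : Set G) := by
          rw [leftCoset_eq_iff]
          have e : (ε0 * (w : G) * (g' * u k * g))⁻¹ * (g'j jx * g' * gi ix * g) =
              g⁻¹ * b * g := by
            rw [heqx, ← hεeq]; group
          rw [e]; exact hb2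
        exact s2.symm.trans (s1.trans he0')
      have hkx : fK (gi ix) (hgi ix) = k :=
        (hKu (gi ix) (hgi ix) k ⟨a, b, ⟨ha1, ha2⟩, ⟨hb1, hb2⟩, heqx⟩).symm
      refine ⟨⟨⟨(ix, jx), hp⟩, hkx⟩, ?_⟩
      rw [QuotientGroup.eq, Subgroup.mem_subgroupOf]
      simp only [Subgroup.coe_mul, InvMemClass.coe_inv]
      obtain ⟨⟨haΦ1, haΦ2⟩, ⟨hbΦ1, hbΦ2⟩, heqΦ⟩ := hQ (gi ix) (hgi ix)
      rw [hkx] at heqΦ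
      set aΦ := fa (gi ix) (hgi ix) with haΦdef
      set bΦ := fb (gi ix) (hgi ix) with hbΦdef
      have h5 : aΦ * u k * bΦ = a * u k * b := heqΦ.symm.trans heqx
      have h6 : aΦ⁻¹ * a = u k * (bΦ * b⁻¹) * (u k)⁻¹ := by
        calc aΦ⁻¹ * a = aΦ⁻¹ * (a * u k * b) * (b⁻¹ * (u k)⁻¹) := by group
        _ = aΦ⁻¹ * (aΦ * u k * bΦ) * (b⁻¹ * (u k)⁻¹) := by rw [h5]
        _ = u k * (bΦ * b⁻¹) * (u k)⁻¹ := by group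
      have hwg : (w : G) = ε0⁻¹ * (g'j jx * (g' * a * g'⁻¹)) := by rw [hεeq]; group
      have emain : (ε0⁻¹ * (g'j jx * (g' * aΦ * g'⁻¹)))⁻¹ * (w : G) =
          g' * (aΦ⁻¹ * a) * g'⁻¹ := by rw [hwg]; group
      rw [emain, Subgroup.mem_inf, mem_Wgrp, mem_conjmap]
      refine ⟨⟨?_, ?_⟩, ?_⟩
      · have e : g' * (aΦ⁻¹ * a) * g'⁻¹ = (g' * aΦ * g'⁻¹)⁻¹ * (g' * a * g'⁻¹) := by group
        rw [e]; exact mul_mem (inv_mem haΦ2) ha2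
      · rw [h6]
        have e : (g' * u k * g)⁻¹ * (g' * (u k * (bΦ * b⁻¹) * (u k)⁻¹) * g'⁻¹) *
            (g' * u k * g) = (g⁻¹ * bΦ * g) * (g⁻¹ * b * g)⁻¹ := by group
        rw [e]; exact mul_mem hbΦ2 (inv_mem hb2)
      · have e : g'⁻¹ * (g' * (aΦ⁻¹ * a) * g'⁻¹) * g' = aΦ⁻¹ * a := by group
        rw [e]; exact mul_mem (inv_mem haΦ1) ha1
  · rw [if_neg hk]
    have hempty : IsEmpty {q : {p : I × J //
        (g'j p.2 * g' * gi p.1 * g) • (U : Set G) = (g' * v * g) • (U : Set G)} //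
          fK (gi q.1.1) (hgi q.1.1) = k} := by
      refine ⟨fun q => hk ?_⟩
      have := condOf q.1.1.1 q.1.1.2 q.1.2
      rwa [q.2] at this
    exact Nat.card_of_isEmpty
end

section
/- Choose a system of representatives g₁, …, g_r for the left cosets of U'₁ in U', and define the R-linear map T : M ⊗_R V → M ⊗_R V' on simple tensors by T(x ⊗ v) = Σ_{i=1}^r (g_i·g)·x ⊗ g_i·τ(v). Then T maps (M ⊗_R V)^U into (M ⊗_R V')^{U'}, and the restriction of T to (M ⊗_R V)^U is independent of the choice of the coset representatives g_i. -/
open TensorProduct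

namespace DosetAux

variable {G : Type*} [Group G]

/-- `P U U' g a b` says `b ∈ a • (U' ∩ gUg⁻¹)`. -/
def P (U U' : Subgroup G) (g a b : G) : Prop :=
  a⁻¹ * b ∈ U' ∧ g⁻¹ * (a⁻¹ * b) * g ∈ U

lemma P.rfl (U U' : Subgroup G) (g a : G) : P U U' g a a := by
  constructor <;> simp [one_mem]

lemma P.symm {U U' : Subgroup G} {g a b : G} (h : P U U' g a b) : P U U' g b a := by
  obtain ⟨h1, h2⟩ := h
  constructor
  · have : b⁻¹ * a = (a⁻¹ * b)⁻¹ := by group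
    rw [this]; exact inv_mem h1
  · have : g⁻¹ * (b⁻¹ * a) * g = (g⁻¹ * (a⁻¹ * b) * g)⁻¹ := by group
    rw [this]; exact inv_mem h2

lemma P.trans {U U' : Subgroup G} {g a b c : G} (h : P U U' g a b) (h' : P U U' g b c) :
    P U U' g a c := by
  obtain ⟨h1, h2⟩ := h
  obtain ⟨h1', h2'⟩ := h'
  constructor
  · have : a⁻¹ * c = (a⁻¹ * b) * (b⁻¹ * c) := by group
    rw [this]; exact mul_mem h1 h1'
  · have : g⁻¹ * (a⁻¹ * c) * g = (g⁻¹ * (a⁻¹ * b) * g) * (g⁻¹ * (b⁻¹ * c) * g) := by group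
    rw [this]; exact mul_mem h2 h2'

variable {R M V V' : Type*} [CommRing R]
    [AddCommGroup M] [Module R M] [DistribMulAction G M] [SMulCommClass G R M]
    {U U' : Subgroup G}
    [AddCommGroup V] [Module R V] [DistribMulAction U V] [SMulCommClass U R V]
    [AddCommGroup V'] [Module R V'] [DistribMulAction U' V'] [SMulCommClass U' R V']

/-- A single term of the double coset operator. -/
noncomputable def T (τ : V →ₗ[R] V') (g h : G) (hh : h ∈ U') : M ⊗[R] V →ₗ[R] M ⊗[R] V' :=
  TensorProduct.map (DistribMulAction.toLinearMap R M (h * g))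
    ((DistribMulAction.toLinearMap R V' (⟨h, hh⟩ : U')).comp τ)

lemma T_congr (τ : V →ₗ[R] V') (g : G)
    (hτ : ∀ (x : G) (hx' : x ∈ U') (hx : g⁻¹ * x * g ∈ U) (v : V),
      τ ((⟨g⁻¹ * x * g, hx⟩ : U) • v) = (⟨x, hx'⟩ : U') • τ v)
    (z : M ⊗[R] V)
    (hz : ∀ (x : G) (hx : x ∈ U),
      TensorProduct.map (DistribMulAction.toLinearMap R M x)
        (DistribMulAction.toLinearMap R V (⟨x, hx⟩ : U)) z = z)
    {h k : G} (hh : h ∈ U') (hk : k ∈ U') (hP : P U U' g k h) :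
    T τ g h hh z = T τ g k hk z := by
  obtain ⟨h1, h2⟩ := hP
  have hz' := hz (g⁻¹ * (k⁻¹ * h) * g) h2
  have hM : DistribMulAction.toLinearMap R M (k * g) ∘ₗ
      DistribMulAction.toLinearMap R M (g⁻¹ * (k⁻¹ * h) * g) =
      DistribMulAction.toLinearMap R M (h * g) := by
    ext m
    simp only [LinearMap.comp_apply, DistribMulAction.toLinearMap, DistribSMul.toLinearMap_apply, ← mul_smul]
    congr 1
    group
  have hV : ((DistribMulAction.toLinearMap R V' (⟨k, hk⟩ : U')).comp τ).comp
      (DistribMulAction.toLinearMap R V (⟨g⁻¹ * (k⁻¹ * h) * g, h2⟩ : U)) =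
      (DistribMulAction.toLinearMap R V' (⟨h, hh⟩ : U')).comp τ := by
    ext v
    simp only [LinearMap.comp_apply, DistribMulAction.toLinearMap, DistribSMul.toLinearMap_apply]
    rw [hτ (k⁻¹ * h) h1 h2 v, ← mul_smul]
    congr 1
    ext
    simp [mul_assoc]
  conv_rhs => rw [← hz']
  rw [← LinearMap.comp_apply, T, T, ← TensorProduct.map_comp, hM, hV]

lemma T_sum_indep (τ : V →ₗ[R] V') (g : G)
    (hτ : ∀ (x : G) (hx' : x ∈ U') (hx : g⁻¹ * x * g ∈ U) (v : V),
      τ ((⟨g⁻¹ * x * g, hx⟩ : U) • v) = (⟨x, hx'⟩ : U') • τ v)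
    (z : M ⊗[R] V)
    (hz : ∀ (x : G) (hx : x ∈ U),
      TensorProduct.map (DistribMulAction.toLinearMap R M x)
        (DistribMulAction.toLinearMap R V (⟨x, hx⟩ : U)) z = z)
    {r r' : ℕ} (gi : Fin r → G) (hgi : ∀ i, gi i ∈ U')
    (hrep : ∀ x ∈ U', ∃! i : Fin r, P U U' g (gi i) x)
    (gi' : Fin r' → G) (hgi' : ∀ i, gi' i ∈ U')
    (hrep' : ∀ x ∈ U', ∃! i : Fin r', P U U' g (gi' i) x) :
    ∑ i : Fin r, T (M := M) τ g (gi i) (hgi i) z = ∑ j : Fin r', T τ g (gi' j) (hgi' j) z := by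
  have hσ : ∀ i : Fin r, ∃! j : Fin r', P U U' g (gi' j) (gi i) := fun i => hrep' (gi i) (hgi i)
  choose σ hσ1 hσ2 using hσ
  have hbij : Function.Bijective σ := by
    constructor
    · intro i i' hii
      have c1 : P U U' g (gi' (σ i)) (gi i) := hσ1 i
      have c2 : P U U' g (gi' (σ i')) (gi i') := hσ1 i'
      rw [hii] at c1
      have : P U U' g (gi i') (gi i) := (c2.symm).trans c1
      have h1 := (hrep (gi i) (hgi i)).unique this (P.rfl U U' g (gi i))
      exact h1.symm
    · intro j
      obtain ⟨i, hi, -⟩ := hrep (gi' j) (hgi' j)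
      exact ⟨i, (hσ2 i j hi.symm).symm⟩
  refine Fintype.sum_bijective σ hbij _ _ (fun i => ?_)
  exact T_congr τ g hτ z hz (hgi i) (hgi' (σ i)) (hσ1 i)

end DosetAux

/-- The double coset operator `[U'gU]_τ` maps `U`-invariants of `M ⊗ V` to
`U'`-invariants of `M ⊗ V'`, and its restriction to the `U`-invariants is independent of
the chosen system of left coset representatives of `U'₁ = U' ∩ g·U·g⁻¹` in `U'`. -/
theorem doset_operator_welldefined
    {R G M V V' : Type*} [CommRing R] [Group G]
    [AddCommGroup M] [Module R M] [DistribMulAction G M] [SMulCommClass G R M]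
    (U U' : Subgroup G) (g : G)
    [AddCommGroup V] [Module R V] [DistribMulAction U V] [SMulCommClass U R V]
    [AddCommGroup V'] [Module R V'] [DistribMulAction U' V'] [SMulCommClass U' R V']
    (τ : V →ₗ[R] V')
    (hτ : ∀ (x : G) (hx' : x ∈ U') (hx : g⁻¹ * x * g ∈ U) (v : V),
      τ ((⟨g⁻¹ * x * g, hx⟩ : U) • v) = (⟨x, hx'⟩ : U') • τ v)
    (r : ℕ) (gi : Fin r → G) (hgi : ∀ i, gi i ∈ U')
    (hrep : ∀ x ∈ U', ∃! i : Fin r, (gi i)⁻¹ * x ∈ U' ∧ g⁻¹ * ((gi i)⁻¹ * x) * g ∈ U)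
    (z : M ⊗[R] V)
    (hz : ∀ (x : G) (hx : x ∈ U),
      TensorProduct.map (DistribMulAction.toLinearMap R M x)
        (DistribMulAction.toLinearMap R V (⟨x, hx⟩ : U)) z = z) :
    (∀ (x : G) (hx : x ∈ U'),
      TensorProduct.map (DistribMulAction.toLinearMap R M x)
          (DistribMulAction.toLinearMap R V' (⟨x, hx⟩ : U'))
          ((∑ i : Fin r, TensorProduct.map (DistribMulAction.toLinearMap R M (gi i * g))
            ((DistribMulAction.toLinearMap R V' (⟨gi i, hgi i⟩ : U')).comp τ)) z) =
        (∑ i : Fin r, TensorProduct.map (DistribMulAction.toLinearMap R M (gi i * g))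
          ((DistribMulAction.toLinearMap R V' (⟨gi i, hgi i⟩ : U')).comp τ)) z) ∧
    ∀ (r' : ℕ) (gi' : Fin r' → G) (hgi' : ∀ i, gi' i ∈ U'),
      (∀ x ∈ U', ∃! i : Fin r', (gi' i)⁻¹ * x ∈ U' ∧ g⁻¹ * ((gi' i)⁻¹ * x) * g ∈ U) →
      (∑ i : Fin r, TensorProduct.map (DistribMulAction.toLinearMap R M (gi i * g))
          ((DistribMulAction.toLinearMap R V' (⟨gi i, hgi i⟩ : U')).comp τ)) z =
        (∑ i : Fin r', TensorProduct.map (DistribMulAction.toLinearMap R M (gi' i * g))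
          ((DistribMulAction.toLinearMap R V' (⟨gi' i, hgi' i⟩ : U')).comp τ)) z := by
  have hrepP : ∀ x ∈ U', ∃! i : Fin r, DosetAux.P U U' g (gi i) x := hrep
  constructor
  · intro x hx
    -- the family `x * gi i` is another system of representatives
    have hgi2 : ∀ i, x * gi i ∈ U' := fun i => mul_mem hx (hgi i)
    have hrep2 : ∀ y ∈ U', ∃! i : Fin r, DosetAux.P U U' g (x * gi i) y := by
      intro y hy
      have hPiff : ∀ i, DosetAux.P U U' g (x * gi i) y ↔ DosetAux.P U U' g (gi i) (x⁻¹ * y) := by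
        intro i
        unfold DosetAux.P
        rw [show (x * gi i)⁻¹ * y = (gi i)⁻¹ * (x⁻¹ * y) by group]
      simpa only [hPiff] using hrepP (x⁻¹ * y) (mul_mem (inv_mem hx) hy)
    rw [LinearMap.sum_apply, map_sum]
    have key : ∀ i : Fin r,
        TensorProduct.map (DistribMulAction.toLinearMap R M x)
          (DistribMulAction.toLinearMap R V' (⟨x, hx⟩ : U'))
          (TensorProduct.map (DistribMulAction.toLinearMap R M (gi i * g))
            ((DistribMulAction.toLinearMap R V' (⟨gi i, hgi i⟩ : U')).comp τ) z) =
        DosetAux.T τ g (x * gi i) (hgi2 i) z := by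
      intro i
      have hM : DistribMulAction.toLinearMap R M x ∘ₗ
          DistribMulAction.toLinearMap R M (gi i * g) =
          DistribMulAction.toLinearMap R M (x * gi i * g) := by
        ext m
        simp only [LinearMap.comp_apply, DistribMulAction.toLinearMap, DistribSMul.toLinearMap_apply, ← mul_smul]
        congr 1
        group
      have hV : DistribMulAction.toLinearMap R V' (⟨x, hx⟩ : U') ∘ₗ
          ((DistribMulAction.toLinearMap R V' (⟨gi i, hgi i⟩ : U')).comp τ) =
          (DistribMulAction.toLinearMap R V' (⟨x * gi i, hgi2 i⟩ : U')).comp τ := by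
        ext v
        simp only [LinearMap.comp_apply, DistribMulAction.toLinearMap, DistribSMul.toLinearMap_apply, ← mul_smul]
        rfl
      rw [← LinearMap.comp_apply, ← TensorProduct.map_comp, hM, hV]
      rfl
    calc ∑ i : Fin r, TensorProduct.map (DistribMulAction.toLinearMap R M x)
          (DistribMulAction.toLinearMap R V' (⟨x, hx⟩ : U'))
          (TensorProduct.map (DistribMulAction.toLinearMap R M (gi i * g))
            ((DistribMulAction.toLinearMap R V' (⟨gi i, hgi i⟩ : U')).comp τ) z)
        = ∑ i : Fin r, DosetAux.T τ g (x * gi i) (hgi2 i) z := by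
          exact Finset.sum_congr rfl fun i _ => key i
      _ = ∑ i : Fin r, DosetAux.T τ g (gi i) (hgi i) z :=
          DosetAux.T_sum_indep τ g hτ z hz _ hgi2 hrep2 gi hgi hrepP
  · intro r' gi' hgi' hrep'
    rw [LinearMap.sum_apply, LinearMap.sum_apply]
    exact DosetAux.T_sum_indep τ g hτ z hz gi hgi hrepP gi' hgi' hrep'
end

section
/- Each τ_k is independent of the choice of the representatives w'_{k,ℓ} and satisfies τ_k(((g'u_kg)⁻¹·w·(g'u_kg))·v) = w·τ_k(v) for all w ∈ W_k and v ∈ V, so that the double coset operator [U''(g'u_kg)U]_{τ_k} : (M ⊗_R V)^U → (M ⊗_R V'')^{U''} is defined; and the composite [U''g'U']_{τ'} ∘ [U'gU]_τ equals Σ_{k=1}^s [U''(g'u_kg)U]_{τ_k} as maps (M ⊗_R V)^U → (M ⊗_R V'')^{U''}. -/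
open TensorProduct

/-- If `c⁻¹·w·c ∈ U` then `c⁻¹·w⁻¹·c ∈ U`. -/
theorem conj_inv_mem {G : Type*} [Group G] (U : Subgroup G) {c w : G}
    (h : c⁻¹ * w * c ∈ U) : c⁻¹ * w⁻¹ * c ∈ U := by
  have h2 : c⁻¹ * w⁻¹ * c = (c⁻¹ * w * c)⁻¹ := by group
  rw [h2]
  exact U.inv_mem h
lemma DCaux.smul_eq_of_eq {G : Type*} [Group G] (U : Subgroup G) {W : Type*} [AddCommMonoid W]
    [DistribMulAction U W] {a b : G} (h : a = b) (ha : a ∈ U) (hb : b ∈ U) (v : W) :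
    (⟨a, ha⟩ : U) • v = (⟨b, hb⟩ : U) • v := by subst h; rfl

lemma DCaux.mk_smul_mk_smul {G : Type*} [Group G] (U : Subgroup G) {W : Type*} [AddCommMonoid W]
    [DistribMulAction U W] {a b : G} (ha : a ∈ U) (hb : b ∈ U) (v : W) :
    (⟨a, ha⟩ : U) • (⟨b, hb⟩ : U) • v = (⟨a * b, mul_mem ha hb⟩ : U) • v := by
  rw [← mul_smul]; rfl

lemma DCaux.toLinearMap_comp {R M : Type*} {G' : Type*} [CommSemiring R] [AddCommMonoid M]
    [Module R M] [Monoid G'] [DistribMulAction G' M] [SMulCommClass G' R M] (a b : G') :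
    (DistribMulAction.toLinearMap R M a).comp (DistribMulAction.toLinearMap R M b)
      = DistribMulAction.toLinearMap R M (a * b) := by
  ext v; simp [mul_smul, DistribMulAction.toLinearMap, DistribSMul.toLinearMap_apply]

lemma DCaux.map_sum_right {R M N P Q : Type*} [CommSemiring R] [AddCommMonoid M] [AddCommMonoid N]
    [AddCommMonoid P] [AddCommMonoid Q] [Module R M] [Module R N] [Module R P] [Module R Q]
    {ι : Type*} (sι : Finset ι) (f : M →ₗ[R] P) (gs : ι → (N →ₗ[R] Q)) :
    TensorProduct.map f (∑ i ∈ sι, gs i) = ∑ i ∈ sι, TensorProduct.map f (gs i) :=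
  map_sum (TensorProduct.mapBilinear (σ₁₂ := RingHom.id R) (M := M) (N := N) (M₂ := P) (N₂ := Q) f) gs sι

/-- The key computation: for `y ∈ W'_k`, `τ'(u_k • τ((c⁻¹yc) • v)) = y • τ'(u_k • τ v)`. -/
lemma DCaux.key {R G V V' V'' : Type*} [CommRing R] [Group G]
    (U U' U'' : Subgroup G) (g g' : G)
    [AddCommGroup V] [Module R V] [DistribMulAction U V] [SMulCommClass U R V]
    [AddCommGroup V'] [Module R V'] [DistribMulAction U' V'] [SMulCommClass U' R V']
    [AddCommGroup V''] [Module R V''] [DistribMulAction U'' V''] [SMulCommClass U'' R V'']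
    (τ : V →ₗ[R] V')
    (hτ : ∀ (x : G) (hx' : x ∈ U') (hx : g⁻¹ * x * g ∈ U) (v : V),
      τ ((⟨g⁻¹ * x * g, hx⟩ : U) • v) = (⟨x, hx'⟩ : U') • τ v)
    (τ' : V' →ₗ[R] V'')
    (hτ' : ∀ (x : G) (hx'' : x ∈ U'') (hx : g'⁻¹ * x * g' ∈ U') (v' : V'),
      τ' ((⟨g'⁻¹ * x * g', hx⟩ : U') • v') = (⟨x, hx''⟩ : U'') • τ' v')
    (uk : G) (huk : uk ∈ U')
    {y : G} (hy0 : y ∈ U'') (hy1 : g'⁻¹ * y * g' ∈ U')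
    (hy2 : (g' * uk * g)⁻¹ * y * (g' * uk * g) ∈ U) (v : V) :
    τ' ((⟨uk, huk⟩ : U') • τ ((⟨(g' * uk * g)⁻¹ * y * (g' * uk * g), hy2⟩ : U) • v))
      = (⟨y, hy0⟩ : U'') • τ' ((⟨uk, huk⟩ : U') • τ v) := by
  set p : G := uk⁻¹ * (g'⁻¹ * y * g') * uk with hp
  have hpU' : p ∈ U' := mul_mem (mul_mem (inv_mem huk) hy1) huk
  have hpe : (g' * uk * g)⁻¹ * y * (g' * uk * g) = g⁻¹ * p * g := by rw [hp]; group
  have hpg : g⁻¹ * p * g ∈ U := hpe ▸ hy2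
  rw [DCaux.smul_eq_of_eq U hpe hy2 hpg v, hτ p hpU' hpg v,
    DCaux.mk_smul_mk_smul U' huk hpU']
  have he2 : uk * p = (g'⁻¹ * y * g') * uk := by rw [hp]; group
  rw [DCaux.smul_eq_of_eq U' he2 (mul_mem huk hpU')
    (mul_mem hy1 huk), ← DCaux.mk_smul_mk_smul U' hy1 huk, hτ' y hy0 hy1]

lemma DCaux.comp_sum {R M N P : Type*} [CommSemiring R] [AddCommMonoid M] [AddCommMonoid N]
    [AddCommMonoid P] [Module R M] [Module R N] [Module R P]
    (f : N →ₗ[R] P) {ι : Type*} (sι : Finset ι) (gs : ι → (M →ₗ[R] N)) :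
    f.comp (∑ i ∈ sι, gs i) = ∑ i ∈ sι, f.comp (gs i) :=
  map_sum (LinearMap.llcomp R M N P f) gs sι

set_option maxHeartbeats 1600000


/-- Composition formula for double coset operators: each `τ_k` is independent of the choice
of the representatives `w'_{k,ℓ}` and intertwines the actions through conjugation by
`g'·u_k·g`, so that `[U''(g'u_kg)U]_{τ_k}` is defined; and the composite
`[U''g'U']_{τ'} ∘ [U'gU]_τ` equals `Σ_k [U''(g'u_kg)U]_{τ_k}` on `U`-invariants. -/
theorem doset_operator_composition
    {R G M V V' V'' : Type*} [CommRing R] [Group G]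
    [AddCommGroup M] [Module R M] [DistribMulAction G M] [SMulCommClass G R M]
    (U U' U'' : Subgroup G) (g g' : G)
    [AddCommGroup V] [Module R V] [DistribMulAction U V] [SMulCommClass U R V]
    [AddCommGroup V'] [Module R V'] [DistribMulAction U' V'] [SMulCommClass U' R V']
    [AddCommGroup V''] [Module R V''] [DistribMulAction U'' V''] [SMulCommClass U'' R V'']
    (τ : V →ₗ[R] V')
    (hτ : ∀ (x : G) (hx' : x ∈ U') (hx : g⁻¹ * x * g ∈ U) (v : V),
      τ ((⟨g⁻¹ * x * g, hx⟩ : U) • v) = (⟨x, hx'⟩ : U') • τ v)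
    (τ' : V' →ₗ[R] V'')
    (hτ' : ∀ (x : G) (hx'' : x ∈ U'') (hx : g'⁻¹ * x * g' ∈ U') (v' : V'),
      τ' ((⟨g'⁻¹ * x * g', hx⟩ : U') • v') = (⟨x, hx''⟩ : U'') • τ' v')
    -- left coset representatives of `U'₁ = U' ∩ g·U·g⁻¹` in `U'`
    (n : ℕ) (gi : Fin n → G) (hgi : ∀ i, gi i ∈ U')
    (hgirep : ∀ x ∈ U', ∃! i : Fin n, (gi i)⁻¹ * x ∈ U' ∧ g⁻¹ * ((gi i)⁻¹ * x) * g ∈ U)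
    -- left coset representatives of `U''₁ = U'' ∩ g'·U'·g'⁻¹` in `U''`
    (m : ℕ) (g'j : Fin m → G) (hg'j : ∀ j, g'j j ∈ U'')
    (hg'jrep : ∀ x ∈ U'', ∃! j : Fin m,
      (g'j j)⁻¹ * x ∈ U'' ∧ g'⁻¹ * ((g'j j)⁻¹ * x) * g' ∈ U')
    -- double coset representatives of `U'₂\U'/U'₁` with `U'₂ = U' ∩ g'⁻¹·U''·g'`
    (s : ℕ) (u : Fin s → G) (hu : ∀ k, u k ∈ U')
    (hurep : ∀ x ∈ U', ∃! k : Fin s, ∃ a b : G,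
      (a ∈ U' ∧ g' * a * g'⁻¹ ∈ U'') ∧ (b ∈ U' ∧ g⁻¹ * b * g ∈ U) ∧ x = a * u k * b)
    -- left coset representatives of `W'_k` in `W_k = U'' ∩ (g'u_kg)·U·(g'u_kg)⁻¹`
    (mk : Fin s → ℕ) (w' : (k : Fin s) → Fin (mk k) → G)
    (hw'1 : ∀ k ℓ, w' k ℓ ∈ U'')
    (hw'2 : ∀ k ℓ, (g' * u k * g)⁻¹ * w' k ℓ * (g' * u k * g) ∈ U)
    (hw'rep : ∀ (k : Fin s), ∀ x : G, x ∈ U'' →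
      (g' * u k * g)⁻¹ * x * (g' * u k * g) ∈ U →
      ∃! ℓ : Fin (mk k),
        ((w' k ℓ)⁻¹ * x ∈ U'' ∧
          (g' * u k * g)⁻¹ * ((w' k ℓ)⁻¹ * x) * (g' * u k * g) ∈ U) ∧
        g'⁻¹ * ((w' k ℓ)⁻¹ * x) * g' ∈ U') :
    -- (a) each `τ_k` is independent of the choice of the `w'_{k,ℓ}`
    (∀ (k : Fin s) (m₂ : ℕ) (w₂ : Fin m₂ → G)
      (hw₂1 : ∀ ℓ, w₂ ℓ ∈ U'')
      (hw₂2 : ∀ ℓ, (g' * u k * g)⁻¹ * w₂ ℓ * (g' * u k * g) ∈ U),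
      (∀ x : G, x ∈ U'' → (g' * u k * g)⁻¹ * x * (g' * u k * g) ∈ U →
        ∃! ℓ : Fin m₂,
          ((w₂ ℓ)⁻¹ * x ∈ U'' ∧
            (g' * u k * g)⁻¹ * ((w₂ ℓ)⁻¹ * x) * (g' * u k * g) ∈ U) ∧
          g'⁻¹ * ((w₂ ℓ)⁻¹ * x) * g' ∈ U') →
      (∑ ℓ : Fin (mk k),
        (DistribMulAction.toLinearMap R V'' (⟨w' k ℓ, hw'1 k ℓ⟩ : U'')).comp
          (τ'.comp ((DistribMulAction.toLinearMap R V' (⟨u k, hu k⟩ : U')).comp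
            (τ.comp (DistribMulAction.toLinearMap R V
              (⟨(g' * u k * g)⁻¹ * (w' k ℓ)⁻¹ * (g' * u k * g),
                conj_inv_mem U (hw'2 k ℓ)⟩ : U)))))) =
      (∑ ℓ : Fin m₂,
        (DistribMulAction.toLinearMap R V'' (⟨w₂ ℓ, hw₂1 ℓ⟩ : U'')).comp
          (τ'.comp ((DistribMulAction.toLinearMap R V' (⟨u k, hu k⟩ : U')).comp
            (τ.comp (DistribMulAction.toLinearMap R V
              (⟨(g' * u k * g)⁻¹ * (w₂ ℓ)⁻¹ * (g' * u k * g),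
                conj_inv_mem U (hw₂2 ℓ)⟩ : U))))))) ∧
    -- (b) each `τ_k` intertwines the `U`- and `U''`-actions through `g'·u_k·g`
    (∀ (k : Fin s) (w : G) (hw1 : w ∈ U'')
      (hw2 : (g' * u k * g)⁻¹ * w * (g' * u k * g) ∈ U) (v : V),
      (∑ ℓ : Fin (mk k),
        (DistribMulAction.toLinearMap R V'' (⟨w' k ℓ, hw'1 k ℓ⟩ : U'')).comp
          (τ'.comp ((DistribMulAction.toLinearMap R V' (⟨u k, hu k⟩ : U')).comp
            (τ.comp (DistribMulAction.toLinearMap R V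
              (⟨(g' * u k * g)⁻¹ * (w' k ℓ)⁻¹ * (g' * u k * g),
                conj_inv_mem U (hw'2 k ℓ)⟩ : U))))))
          ((⟨(g' * u k * g)⁻¹ * w * (g' * u k * g), hw2⟩ : U) • v) =
        (⟨w, hw1⟩ : U'') •
          ((∑ ℓ : Fin (mk k),
            (DistribMulAction.toLinearMap R V'' (⟨w' k ℓ, hw'1 k ℓ⟩ : U'')).comp
              (τ'.comp ((DistribMulAction.toLinearMap R V' (⟨u k, hu k⟩ : U')).comp
                (τ.comp (DistribMulAction.toLinearMap R V
                  (⟨(g' * u k * g)⁻¹ * (w' k ℓ)⁻¹ * (g' * u k * g),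
                    conj_inv_mem U (hw'2 k ℓ)⟩ : U)))))) v)) ∧
    -- (c) the composite equals the sum of the operators `[U''(g'u_kg)U]_{τ_k}`
    (∀ (q : Fin s → ℕ) (t : (k : Fin s) → Fin (q k) → G)
      (ht1 : ∀ k i, t k i ∈ U''),
      (∀ (k : Fin s), ∀ x ∈ U'', ∃! i : Fin (q k),
        (t k i)⁻¹ * x ∈ U'' ∧
          (g' * u k * g)⁻¹ * ((t k i)⁻¹ * x) * (g' * u k * g) ∈ U) →
      ∀ z : M ⊗[R] V,
        (∀ (x : G) (hx : x ∈ U),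
          TensorProduct.map (DistribMulAction.toLinearMap R M x)
            (DistribMulAction.toLinearMap R V (⟨x, hx⟩ : U)) z = z) →
        (∑ j : Fin m, TensorProduct.map
            (DistribMulAction.toLinearMap R M (g'j j * g'))
            ((DistribMulAction.toLinearMap R V'' (⟨g'j j, hg'j j⟩ : U'')).comp τ'))
          ((∑ i : Fin n, TensorProduct.map
            (DistribMulAction.toLinearMap R M (gi i * g))
            ((DistribMulAction.toLinearMap R V' (⟨gi i, hgi i⟩ : U')).comp τ)) z) =
        ∑ k : Fin s,
          (∑ i : Fin (q k), TensorProduct.map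
            (DistribMulAction.toLinearMap R M (t k i * (g' * u k * g)))
            ((DistribMulAction.toLinearMap R V'' (⟨t k i, ht1 k i⟩ : U'')).comp
              (∑ ℓ : Fin (mk k),
                (DistribMulAction.toLinearMap R V'' (⟨w' k ℓ, hw'1 k ℓ⟩ : U'')).comp
                  (τ'.comp ((DistribMulAction.toLinearMap R V'
                      (⟨u k, hu k⟩ : U')).comp
                    (τ.comp (DistribMulAction.toLinearMap R V
                      (⟨(g' * u k * g)⁻¹ * (w' k ℓ)⁻¹ * (g' * u k * g),
                        conj_inv_mem U (hw'2 k ℓ)⟩ : U)))))))) z) := by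
  classical
  refine ⟨?_, ?_, ?_⟩
  · -- part (a)
    intro k m₂ w₂ hw₂1 hw₂2 hw₂rep
    apply LinearMap.ext; intro v
    simp only [LinearMap.sum_apply, LinearMap.coe_comp, Function.comp_apply,
      DistribMulAction.toLinearMap, DistribSMul.toLinearMap_apply]
    refine Finset.sum_nbij' (fun ℓ => (hw₂rep (w' k ℓ) (hw'1 k ℓ) (hw'2 k ℓ)).choose)
      (fun ℓ₂ => (hw'rep k (w₂ ℓ₂) (hw₂1 ℓ₂) (hw₂2 ℓ₂)).choose)
      (fun _ _ => Finset.mem_univ _) (fun _ _ => Finset.mem_univ _) ?_ ?_ ?_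
    · intro ℓ _
      obtain ⟨⟨hy0, hy2⟩, hy1⟩ := (hw₂rep (w' k ℓ) (hw'1 k ℓ) (hw'2 k ℓ)).choose_spec.1
      refine ((hw'rep k (w₂ _) (hw₂1 _) (hw₂2 _)).choose_spec.2 ℓ ⟨⟨?_, ?_⟩, ?_⟩).symm
      · have e : (w' k ℓ)⁻¹ * w₂ ((hw₂rep (w' k ℓ) (hw'1 k ℓ) (hw'2 k ℓ)).choose)
            = (((w₂ ((hw₂rep (w' k ℓ) (hw'1 k ℓ) (hw'2 k ℓ)).choose))⁻¹ * w' k ℓ))⁻¹ := by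
          group
        rw [e]; exact inv_mem hy0
      · have e : (g' * u k * g)⁻¹ * ((w' k ℓ)⁻¹ *
              w₂ ((hw₂rep (w' k ℓ) (hw'1 k ℓ) (hw'2 k ℓ)).choose)) * (g' * u k * g)
            = ((g' * u k * g)⁻¹ * ((w₂ ((hw₂rep (w' k ℓ) (hw'1 k ℓ) (hw'2 k ℓ)).choose))⁻¹ *
              w' k ℓ) * (g' * u k * g))⁻¹ := by group
        rw [e]; exact inv_mem hy2
      · have e : g'⁻¹ * ((w' k ℓ)⁻¹ *
              w₂ ((hw₂rep (w' k ℓ) (hw'1 k ℓ) (hw'2 k ℓ)).choose)) * g'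
            = (g'⁻¹ * ((w₂ ((hw₂rep (w' k ℓ) (hw'1 k ℓ) (hw'2 k ℓ)).choose))⁻¹ *
              w' k ℓ) * g')⁻¹ := by group
        rw [e]; exact inv_mem hy1
    · intro ℓ₂ _
      obtain ⟨⟨hy0, hy2⟩, hy1⟩ := (hw'rep k (w₂ ℓ₂) (hw₂1 ℓ₂) (hw₂2 ℓ₂)).choose_spec.1
      refine ((hw₂rep (w' k _) (hw'1 k _) (hw'2 k _)).choose_spec.2 ℓ₂ ⟨⟨?_, ?_⟩, ?_⟩).symm
      · have e : (w₂ ℓ₂)⁻¹ * w' k ((hw'rep k (w₂ ℓ₂) (hw₂1 ℓ₂) (hw₂2 ℓ₂)).choose)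
            = ((w' k ((hw'rep k (w₂ ℓ₂) (hw₂1 ℓ₂) (hw₂2 ℓ₂)).choose))⁻¹ * w₂ ℓ₂)⁻¹ := by
          group
        rw [e]; exact inv_mem hy0
      · have e : (g' * u k * g)⁻¹ * ((w₂ ℓ₂)⁻¹ *
              w' k ((hw'rep k (w₂ ℓ₂) (hw₂1 ℓ₂) (hw₂2 ℓ₂)).choose)) * (g' * u k * g)
            = ((g' * u k * g)⁻¹ * ((w' k ((hw'rep k (w₂ ℓ₂) (hw₂1 ℓ₂) (hw₂2 ℓ₂)).choose))⁻¹ *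
              w₂ ℓ₂) * (g' * u k * g))⁻¹ := by group
        rw [e]; exact inv_mem hy2
      · have e : g'⁻¹ * ((w₂ ℓ₂)⁻¹ *
              w' k ((hw'rep k (w₂ ℓ₂) (hw₂1 ℓ₂) (hw₂2 ℓ₂)).choose)) * g'
            = (g'⁻¹ * ((w' k ((hw'rep k (w₂ ℓ₂) (hw₂1 ℓ₂) (hw₂2 ℓ₂)).choose))⁻¹ *
              w₂ ℓ₂) * g')⁻¹ := by group
        rw [e]; exact inv_mem hy1
    · intro ℓ _
      beta_reduce
      obtain ⟨⟨hy0, hy2⟩, hy1⟩ := (hw₂rep (w' k ℓ) (hw'1 k ℓ) (hw'2 k ℓ)).choose_spec.1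
      set ℓ₂ := (hw₂rep (w' k ℓ) (hw'1 k ℓ) (hw'2 k ℓ)).choose with hℓ₂def
      have hy0' : ((w₂ ℓ₂)⁻¹ * w' k ℓ)⁻¹ ∈ U'' := inv_mem hy0
      have hy1' : g'⁻¹ * ((w₂ ℓ₂)⁻¹ * w' k ℓ)⁻¹ * g' ∈ U' := conj_inv_mem U' hy1
      have hy2' : (g' * u k * g)⁻¹ * ((w₂ ℓ₂)⁻¹ * w' k ℓ)⁻¹ * (g' * u k * g) ∈ U :=
        conj_inv_mem U hy2
      have e1 : (⟨(g' * u k * g)⁻¹ * (w' k ℓ)⁻¹ * (g' * u k * g),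
            conj_inv_mem U (hw'2 k ℓ)⟩ : U) • v
          = (⟨(g' * u k * g)⁻¹ * ((w₂ ℓ₂)⁻¹ * w' k ℓ)⁻¹ * (g' * u k * g), hy2'⟩ : U) •
            (⟨(g' * u k * g)⁻¹ * (w₂ ℓ₂)⁻¹ * (g' * u k * g),
              conj_inv_mem U (hw₂2 ℓ₂)⟩ : U) • v := by
        rw [DCaux.mk_smul_mk_smul]
        exact DCaux.smul_eq_of_eq U (by group) _ _ v
      rw [e1, DCaux.key U U' U'' g g' τ hτ τ' hτ' (u k) (hu k) hy0' hy1' hy2',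
        DCaux.mk_smul_mk_smul]
      exact DCaux.smul_eq_of_eq U'' (by group) _ _ _
  · -- part (b)
    intro k w hw1 hw2 v
    simp only [LinearMap.sum_apply, LinearMap.coe_comp, Function.comp_apply,
      DistribMulAction.toLinearMap, DistribSMul.toLinearMap_apply, Finset.smul_sum]
    have hx0 : ∀ ℓ : Fin (mk k), w⁻¹ * w' k ℓ ∈ U'' :=
      fun ℓ => mul_mem (inv_mem hw1) (hw'1 k ℓ)
    have hx2 : ∀ ℓ : Fin (mk k),
        (g' * u k * g)⁻¹ * (w⁻¹ * w' k ℓ) * (g' * u k * g) ∈ U := by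
      intro ℓ
      have e : (g' * u k * g)⁻¹ * (w⁻¹ * w' k ℓ) * (g' * u k * g)
          = ((g' * u k * g)⁻¹ * w⁻¹ * (g' * u k * g)) *
            ((g' * u k * g)⁻¹ * w' k ℓ * (g' * u k * g)) := by group
      rw [e]; exact mul_mem (conj_inv_mem U hw2) (hw'2 k ℓ)
    have hx0' : ∀ ℓ : Fin (mk k), w * w' k ℓ ∈ U'' :=
      fun ℓ => mul_mem hw1 (hw'1 k ℓ)
    have hx2' : ∀ ℓ : Fin (mk k),
        (g' * u k * g)⁻¹ * (w * w' k ℓ) * (g' * u k * g) ∈ U := by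
      intro ℓ
      have e : (g' * u k * g)⁻¹ * (w * w' k ℓ) * (g' * u k * g)
          = ((g' * u k * g)⁻¹ * w * (g' * u k * g)) *
            ((g' * u k * g)⁻¹ * w' k ℓ * (g' * u k * g)) := by group
      rw [e]; exact mul_mem hw2 (hw'2 k ℓ)
    refine Finset.sum_nbij' (fun ℓ => (hw'rep k (w⁻¹ * w' k ℓ) (hx0 ℓ) (hx2 ℓ)).choose)
      (fun ℓ => (hw'rep k (w * w' k ℓ) (hx0' ℓ) (hx2' ℓ)).choose)
      (fun _ _ => Finset.mem_univ _) (fun _ _ => Finset.mem_univ _) ?_ ?_ ?_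
    · intro ℓ _
      obtain ⟨⟨hy0, hy2⟩, hy1⟩ := (hw'rep k (w⁻¹ * w' k ℓ) (hx0 ℓ) (hx2 ℓ)).choose_spec.1
      refine ((hw'rep k (w * w' k _) (hx0' _) (hx2' _)).choose_spec.2 ℓ ⟨⟨?_, ?_⟩, ?_⟩).symm
      · have e : (w' k ℓ)⁻¹ * (w * w' k ((hw'rep k (w⁻¹ * w' k ℓ) (hx0 ℓ) (hx2 ℓ)).choose))
            = ((w' k ((hw'rep k (w⁻¹ * w' k ℓ) (hx0 ℓ) (hx2 ℓ)).choose))⁻¹ *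
              (w⁻¹ * w' k ℓ))⁻¹ := by group
        rw [e]; exact inv_mem hy0
      · have e : (g' * u k * g)⁻¹ * ((w' k ℓ)⁻¹ *
              (w * w' k ((hw'rep k (w⁻¹ * w' k ℓ) (hx0 ℓ) (hx2 ℓ)).choose))) * (g' * u k * g)
            = ((g' * u k * g)⁻¹ * ((w' k ((hw'rep k (w⁻¹ * w' k ℓ) (hx0 ℓ) (hx2 ℓ)).choose))⁻¹ *
              (w⁻¹ * w' k ℓ)) * (g' * u k * g))⁻¹ := by group
        rw [e]; exact inv_mem hy2
      · have e : g'⁻¹ * ((w' k ℓ)⁻¹ *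
              (w * w' k ((hw'rep k (w⁻¹ * w' k ℓ) (hx0 ℓ) (hx2 ℓ)).choose))) * g'
            = (g'⁻¹ * ((w' k ((hw'rep k (w⁻¹ * w' k ℓ) (hx0 ℓ) (hx2 ℓ)).choose))⁻¹ *
              (w⁻¹ * w' k ℓ)) * g')⁻¹ := by group
        rw [e]; exact inv_mem hy1
    · intro ℓ _
      obtain ⟨⟨hy0, hy2⟩, hy1⟩ := (hw'rep k (w * w' k ℓ) (hx0' ℓ) (hx2' ℓ)).choose_spec.1
      refine ((hw'rep k (w⁻¹ * w' k _) (hx0 _) (hx2 _)).choose_spec.2 ℓ ⟨⟨?_, ?_⟩, ?_⟩).symm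
      · have e : (w' k ℓ)⁻¹ * (w⁻¹ * w' k ((hw'rep k (w * w' k ℓ) (hx0' ℓ) (hx2' ℓ)).choose))
            = ((w' k ((hw'rep k (w * w' k ℓ) (hx0' ℓ) (hx2' ℓ)).choose))⁻¹ *
              (w * w' k ℓ))⁻¹ := by group
        rw [e]; exact inv_mem hy0
      · have e : (g' * u k * g)⁻¹ * ((w' k ℓ)⁻¹ *
              (w⁻¹ * w' k ((hw'rep k (w * w' k ℓ) (hx0' ℓ) (hx2' ℓ)).choose))) * (g' * u k * g)
            = ((g' * u k * g)⁻¹ * ((w' k ((hw'rep k (w * w' k ℓ) (hx0' ℓ) (hx2' ℓ)).choose))⁻¹ *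
              (w * w' k ℓ)) * (g' * u k * g))⁻¹ := by group
        rw [e]; exact inv_mem hy2
      · have e : g'⁻¹ * ((w' k ℓ)⁻¹ *
              (w⁻¹ * w' k ((hw'rep k (w * w' k ℓ) (hx0' ℓ) (hx2' ℓ)).choose))) * g'
            = (g'⁻¹ * ((w' k ((hw'rep k (w * w' k ℓ) (hx0' ℓ) (hx2' ℓ)).choose))⁻¹ *
              (w * w' k ℓ)) * g')⁻¹ := by group
        rw [e]; exact inv_mem hy1
    · intro ℓ _
      beta_reduce
      obtain ⟨⟨hy0, hy2⟩, hy1⟩ := (hw'rep k (w⁻¹ * w' k ℓ) (hx0 ℓ) (hx2 ℓ)).choose_spec.1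
      set ℓ' := (hw'rep k (w⁻¹ * w' k ℓ) (hx0 ℓ) (hx2 ℓ)).choose with hℓ'def
      have hy0' : ((w' k ℓ')⁻¹ * (w⁻¹ * w' k ℓ))⁻¹ ∈ U'' := inv_mem hy0
      have hy1' : g'⁻¹ * ((w' k ℓ')⁻¹ * (w⁻¹ * w' k ℓ))⁻¹ * g' ∈ U' := conj_inv_mem U' hy1
      have hy2' : (g' * u k * g)⁻¹ * ((w' k ℓ')⁻¹ * (w⁻¹ * w' k ℓ))⁻¹ * (g' * u k * g) ∈ U :=
        conj_inv_mem U hy2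
      have e1 : (⟨(g' * u k * g)⁻¹ * (w' k ℓ)⁻¹ * (g' * u k * g),
            conj_inv_mem U (hw'2 k ℓ)⟩ : U) •
            (⟨(g' * u k * g)⁻¹ * w * (g' * u k * g), hw2⟩ : U) • v
          = (⟨(g' * u k * g)⁻¹ * ((w' k ℓ')⁻¹ * (w⁻¹ * w' k ℓ))⁻¹ * (g' * u k * g), hy2'⟩ : U) •
            (⟨(g' * u k * g)⁻¹ * (w' k ℓ')⁻¹ * (g' * u k * g),
              conj_inv_mem U (hw'2 k ℓ')⟩ : U) • v := by
        rw [DCaux.mk_smul_mk_smul, DCaux.mk_smul_mk_smul]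
        exact DCaux.smul_eq_of_eq U (by group) _ _ v
      rw [e1, DCaux.key U U' U'' g g' τ hτ τ' hτ' (u k) (hu k) hy0' hy1' hy2',
        DCaux.mk_smul_mk_smul, DCaux.mk_smul_mk_smul]
      exact DCaux.smul_eq_of_eq U'' (by group) _ _ _
  · -- part (c)
    intro q t ht1 htrep z hz
    have hcomp : ∀ (A₂ A₁ : G) (B₂ : V' →ₗ[R] V'') (B₁ : V →ₗ[R] V') (y : M ⊗[R] V),
        TensorProduct.map (DistribMulAction.toLinearMap R M A₂) B₂
          (TensorProduct.map (DistribMulAction.toLinearMap R M A₁) B₁ y)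
        = TensorProduct.map (DistribMulAction.toLinearMap R M (A₂ * A₁)) (B₂.comp B₁) y := by
      intro A₂ A₁ B₂ B₁ y
      rw [← LinearMap.comp_apply, ← TensorProduct.map_comp, DCaux.toLinearMap_comp]
    have hshift : ∀ (A : G) (B : V →ₗ[R] V'') (x : G) (hx : x ∈ U),
        TensorProduct.map (DistribMulAction.toLinearMap R M (A * x))
          (B.comp (DistribMulAction.toLinearMap R V (⟨x, hx⟩ : U))) z
        = TensorProduct.map (DistribMulAction.toLinearMap R M A) B z := by
      intro A B x hx
      conv_rhs => rw [← hz x hx]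
      rw [← LinearMap.comp_apply, ← TensorProduct.map_comp, DCaux.toLinearMap_comp]
    have H1 : ∀ (j : Fin m) (i : Fin n), ∃ x : Σ k : Fin s, Fin (q k) × Fin (mk k),
        ((g' * u x.1 * g)⁻¹ * (t x.1 x.2.1)⁻¹ * (g'j j * g' * gi i * g) ∈ U) ∧
        (g'⁻¹ * (w' x.1 x.2.2)⁻¹ * (t x.1 x.2.1)⁻¹ * (g'j j * g' * gi i * g) * g⁻¹ ∈ U') := by
      intro j i
      obtain ⟨k, ⟨a, b, ⟨haU, haC⟩, ⟨hbU, hbC⟩, hab⟩, -⟩ := hurep (gi i) (hgi i)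
      have hE : g'j j * (g' * a * g'⁻¹) ∈ U'' := mul_mem (hg'j j) haC
      obtain ⟨i', ⟨hi'1, hi'2⟩, -⟩ := htrep k (g'j j * (g' * a * g'⁻¹)) hE
      obtain ⟨ℓ, ⟨⟨hl1, hl2⟩, hl3⟩, -⟩ :=
        hw'rep k ((t k i')⁻¹ * (g'j j * (g' * a * g'⁻¹))) hi'1 hi'2
      refine ⟨⟨k, i', ℓ⟩, ?_, ?_⟩
      · have e : (g' * u k * g)⁻¹ * (t k i')⁻¹ * (g'j j * g' * gi i * g)
            = ((g' * u k * g)⁻¹ * ((t k i')⁻¹ * (g'j j * (g' * a * g'⁻¹))) * (g' * u k * g))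
              * (g⁻¹ * b * g) := by
          rw [hab]; group
        rw [e]; exact mul_mem hi'2 hbC
      · have e : g'⁻¹ * (w' k ℓ)⁻¹ * (t k i')⁻¹ * (g'j j * g' * gi i * g) * g⁻¹
            = (g'⁻¹ * ((w' k ℓ)⁻¹ * ((t k i')⁻¹ * (g'j j * (g' * a * g'⁻¹)))) * g')
              * (u k * b) := by
          rw [hab]; group
        rw [e]; exact mul_mem hl3 (mul_mem (hu k) hbU)
    have H2 : ∀ (j : Fin m) (i : Fin n) (x y : Σ k : Fin s, Fin (q k) × Fin (mk k)),
        (((g' * u x.1 * g)⁻¹ * (t x.1 x.2.1)⁻¹ * (g'j j * g' * gi i * g) ∈ U) ∧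
         (g'⁻¹ * (w' x.1 x.2.2)⁻¹ * (t x.1 x.2.1)⁻¹ * (g'j j * g' * gi i * g) * g⁻¹ ∈ U')) →
        (((g' * u y.1 * g)⁻¹ * (t y.1 y.2.1)⁻¹ * (g'j j * g' * gi i * g) ∈ U) ∧
         (g'⁻¹ * (w' y.1 y.2.2)⁻¹ * (t y.1 y.2.1)⁻¹ * (g'j j * g' * gi i * g) * g⁻¹ ∈ U')) →
        x = y := by
      have hdec : ∀ (j : Fin m) (i : Fin n) (k : Fin s) (i' : Fin (q k)) (ℓ : Fin (mk k)),
          ((g' * u k * g)⁻¹ * (t k i')⁻¹ * (g'j j * g' * gi i * g) ∈ U) →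
          (g'⁻¹ * (w' k ℓ)⁻¹ * (t k i')⁻¹ * (g'j j * g' * gi i * g) * g⁻¹ ∈ U') →
          ∃ a b : G, (a ∈ U' ∧ g' * a * g'⁻¹ ∈ U'') ∧ (b ∈ U' ∧ g⁻¹ * b * g ∈ U) ∧
            gi i = a * u k * b := by
        intro j i k i' ℓ h1 h2
        have hbU : (u k)⁻¹ *
            (g'⁻¹ * (w' k ℓ)⁻¹ * (t k i')⁻¹ * (g'j j * g' * gi i * g) * g⁻¹) ∈ U' :=
          mul_mem (inv_mem (hu k)) h2
        refine ⟨g'⁻¹ * ((g'j j)⁻¹ * (t k i' * w' k ℓ)) * g',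
          (u k)⁻¹ * (g'⁻¹ * (w' k ℓ)⁻¹ * (t k i')⁻¹ * (g'j j * g' * gi i * g) * g⁻¹),
          ⟨?_, ?_⟩, ⟨hbU, ?_⟩, ?_⟩
        · have e : g'⁻¹ * ((g'j j)⁻¹ * (t k i' * w' k ℓ)) * g'
              = gi i * ((u k)⁻¹ *
                (g'⁻¹ * (w' k ℓ)⁻¹ * (t k i')⁻¹ * (g'j j * g' * gi i * g) * g⁻¹))⁻¹
                * (u k)⁻¹ := by group
          rw [e]; exact mul_mem (mul_mem (hgi i) (inv_mem hbU)) (inv_mem (hu k))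
        · have e : g' * (g'⁻¹ * ((g'j j)⁻¹ * (t k i' * w' k ℓ)) * g') * g'⁻¹
              = (g'j j)⁻¹ * (t k i' * w' k ℓ) := by group
          rw [e]; exact mul_mem (inv_mem (hg'j j)) (mul_mem (ht1 k i') (hw'1 k ℓ))
        · have e : g⁻¹ * ((u k)⁻¹ *
              (g'⁻¹ * (w' k ℓ)⁻¹ * (t k i')⁻¹ * (g'j j * g' * gi i * g) * g⁻¹)) * g
              = ((g' * u k * g)⁻¹ * (w' k ℓ)⁻¹ * (g' * u k * g)) *
                ((g' * u k * g)⁻¹ * (t k i')⁻¹ * (g'j j * g' * gi i * g)) := by group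
          rw [e]; exact mul_mem (conj_inv_mem U (hw'2 k ℓ)) h1
        · group
      rintro j i ⟨k₁, i₁, ℓ₁⟩ ⟨k₂, i₂, ℓ₂⟩ ⟨hx1, hx2⟩ ⟨hy1, hy2⟩
      obtain ⟨a, b, ha, hb, hab⟩ := hdec j i k₁ i₁ ℓ₁ hx1 hx2
      obtain ⟨a₂, b₂, ha₂, hb₂, hab₂⟩ := hdec j i k₂ i₂ ℓ₂ hy1 hy2
      obtain ⟨k₀, -, hkuniq⟩ := hurep (gi i) (hgi i)
      have hk : k₁ = k₂ :=
        (hkuniq k₁ ⟨a, b, ha, hb, hab⟩).trans (hkuniq k₂ ⟨a₂, b₂, ha₂, hb₂, hab₂⟩).symm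
      subst hk
      have hi : i₁ = i₂ := by
        obtain ⟨i₀, -, hiuniq⟩ := htrep k₁ (t k₁ i₁) (ht1 k₁ i₁)
        have e₁ : (t k₁ i₁)⁻¹ * t k₁ i₁ ∈ U'' ∧
            (g' * u k₁ * g)⁻¹ * ((t k₁ i₁)⁻¹ * t k₁ i₁) * (g' * u k₁ * g) ∈ U := by
          constructor
          · rw [show (t k₁ i₁)⁻¹ * t k₁ i₁ = 1 by group]; exact one_mem U''
          · rw [show (g' * u k₁ * g)⁻¹ * ((t k₁ i₁)⁻¹ * t k₁ i₁) * (g' * u k₁ * g) = 1 by group]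
            exact one_mem U
        have e₂ : (t k₁ i₂)⁻¹ * t k₁ i₁ ∈ U'' ∧
            (g' * u k₁ * g)⁻¹ * ((t k₁ i₂)⁻¹ * t k₁ i₁) * (g' * u k₁ * g) ∈ U := by
          refine ⟨mul_mem (inv_mem (ht1 k₁ i₂)) (ht1 k₁ i₁), ?_⟩
          rw [show (g' * u k₁ * g)⁻¹ * ((t k₁ i₂)⁻¹ * t k₁ i₁) * (g' * u k₁ * g)
              = ((g' * u k₁ * g)⁻¹ * (t k₁ i₂)⁻¹ * (g'j j * g' * gi i * g)) *
                ((g' * u k₁ * g)⁻¹ * (t k₁ i₁)⁻¹ * (g'j j * g' * gi i * g))⁻¹ by group]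
          exact mul_mem hy1 (inv_mem hx1)
        exact (hiuniq i₁ e₁).trans (hiuniq i₂ e₂).symm
      subst hi
      have hl : ℓ₁ = ℓ₂ := by
        obtain ⟨ℓ₀, -, hluniq⟩ := hw'rep k₁ (w' k₁ ℓ₁) (hw'1 k₁ ℓ₁) (hw'2 k₁ ℓ₁)
        refine (hluniq ℓ₁ ⟨⟨?_, ?_⟩, ?_⟩).trans (hluniq ℓ₂ ⟨⟨?_, ?_⟩, ?_⟩).symm
        · rw [show (w' k₁ ℓ₁)⁻¹ * w' k₁ ℓ₁ = 1 by group]; exact one_mem U''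
        · rw [show (g' * u k₁ * g)⁻¹ * ((w' k₁ ℓ₁)⁻¹ * w' k₁ ℓ₁) * (g' * u k₁ * g) = 1 by group]
          exact one_mem U
        · rw [show g'⁻¹ * ((w' k₁ ℓ₁)⁻¹ * w' k₁ ℓ₁) * g' = 1 by group]; exact one_mem U'
        · exact mul_mem (inv_mem (hw'1 k₁ ℓ₂)) (hw'1 k₁ ℓ₁)
        · rw [show (g' * u k₁ * g)⁻¹ * ((w' k₁ ℓ₂)⁻¹ * w' k₁ ℓ₁) * (g' * u k₁ * g)
              = ((g' * u k₁ * g)⁻¹ * (w' k₁ ℓ₂)⁻¹ * (g' * u k₁ * g)) *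
                ((g' * u k₁ * g)⁻¹ * w' k₁ ℓ₁ * (g' * u k₁ * g)) by group]
          exact mul_mem (conj_inv_mem U (hw'2 k₁ ℓ₂)) (hw'2 k₁ ℓ₁)
        · rw [show g'⁻¹ * ((w' k₁ ℓ₂)⁻¹ * w' k₁ ℓ₁) * g'
              = (g'⁻¹ * (w' k₁ ℓ₂)⁻¹ * (t k₁ i₁)⁻¹ * (g'j j * g' * gi i * g) * g⁻¹) *
                (g'⁻¹ * (w' k₁ ℓ₁)⁻¹ * (t k₁ i₁)⁻¹ * (g'j j * g' * gi i * g) * g⁻¹)⁻¹ by group]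
          exact mul_mem hy2 (inv_mem hx2)
      subst hl
      rfl
    have H3 : ∀ x : Σ k : Fin s, Fin (q k) × Fin (mk k), ∃ (j : Fin m) (i : Fin n),
        ((g' * u x.1 * g)⁻¹ * (t x.1 x.2.1)⁻¹ * (g'j j * g' * gi i * g) ∈ U) ∧
        (g'⁻¹ * (w' x.1 x.2.2)⁻¹ * (t x.1 x.2.1)⁻¹ * (g'j j * g' * gi i * g) * g⁻¹ ∈ U') := by
      rintro ⟨k, i', ℓ⟩
      have hF : t k i' * w' k ℓ ∈ U'' := mul_mem (ht1 k i') (hw'1 k ℓ)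
      obtain ⟨j, ⟨hj1, hj2⟩, -⟩ := hg'jrep (t k i' * w' k ℓ) hF
      have hh : g'⁻¹ * ((g'j j)⁻¹ * (t k i' * w' k ℓ)) * g' * u k ∈ U' := mul_mem hj2 (hu k)
      obtain ⟨i, ⟨hi1, hi2⟩, -⟩ :=
        hgirep (g'⁻¹ * ((g'j j)⁻¹ * (t k i' * w' k ℓ)) * g' * u k) hh
      refine ⟨j, i, ?_, ?_⟩
      · have e : (g' * u k * g)⁻¹ * (t k i')⁻¹ * (g'j j * g' * gi i * g)
            = ((g' * u k * g)⁻¹ * w' k ℓ * (g' * u k * g)) *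
              (g⁻¹ * ((gi i)⁻¹ *
                (g'⁻¹ * ((g'j j)⁻¹ * (t k i' * w' k ℓ)) * g' * u k)) * g)⁻¹ := by group
        rw [e]; exact mul_mem (hw'2 k ℓ) (inv_mem hi2)
      · have e : g'⁻¹ * (w' k ℓ)⁻¹ * (t k i')⁻¹ * (g'j j * g' * gi i * g) * g⁻¹
            = u k * ((gi i)⁻¹ *
              (g'⁻¹ * ((g'j j)⁻¹ * (t k i' * w' k ℓ)) * g' * u k))⁻¹ := by group
        rw [e]; exact mul_mem (hu k) (inv_mem hi1)
    have H4 : ∀ (x : Σ k : Fin s, Fin (q k) × Fin (mk k)) (j₁ j₂ : Fin m) (i₁ i₂ : Fin n),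
        (((g' * u x.1 * g)⁻¹ * (t x.1 x.2.1)⁻¹ * (g'j j₁ * g' * gi i₁ * g) ∈ U) ∧
         (g'⁻¹ * (w' x.1 x.2.2)⁻¹ * (t x.1 x.2.1)⁻¹ * (g'j j₁ * g' * gi i₁ * g) * g⁻¹ ∈ U')) →
        (((g' * u x.1 * g)⁻¹ * (t x.1 x.2.1)⁻¹ * (g'j j₂ * g' * gi i₂ * g) ∈ U) ∧
         (g'⁻¹ * (w' x.1 x.2.2)⁻¹ * (t x.1 x.2.1)⁻¹ * (g'j j₂ * g' * gi i₂ * g) * g⁻¹ ∈ U')) →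
        j₁ = j₂ ∧ i₁ = i₂ := by
      rintro ⟨k, i', ℓ⟩ j₁ j₂ i₁ i₂ ⟨hx1, hx2⟩ ⟨hy1, hy2⟩
      have hF : t k i' * w' k ℓ ∈ U'' := mul_mem (ht1 k i') (hw'1 k ℓ)
      have hjpred : ∀ (jx : Fin m) (ix : Fin n),
          g'⁻¹ * (w' k ℓ)⁻¹ * (t k i')⁻¹ * (g'j jx * g' * gi ix * g) * g⁻¹ ∈ U' →
          (g'j jx)⁻¹ * (t k i' * w' k ℓ) ∈ U'' ∧
            g'⁻¹ * ((g'j jx)⁻¹ * (t k i' * w' k ℓ)) * g' ∈ U' := by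
        intro jx ix h2
        refine ⟨mul_mem (inv_mem (hg'j jx)) hF, ?_⟩
        have e : g'⁻¹ * ((g'j jx)⁻¹ * (t k i' * w' k ℓ)) * g'
            = gi ix *
              (g'⁻¹ * (w' k ℓ)⁻¹ * (t k i')⁻¹ * (g'j jx * g' * gi ix * g) * g⁻¹)⁻¹ := by group
        rw [e]; exact mul_mem (hgi ix) (inv_mem h2)
      obtain ⟨j₀, -, hjuniq⟩ := hg'jrep (t k i' * w' k ℓ) hF
      have hj : j₁ = j₂ :=
        (hjuniq j₁ (hjpred j₁ i₁ hx2)).trans (hjuniq j₂ (hjpred j₂ i₂ hy2)).symm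
      subst hj
      have hh : g'⁻¹ * ((g'j j₁)⁻¹ * (t k i' * w' k ℓ)) * g' * u k ∈ U' :=
        mul_mem (hjpred j₁ i₁ hx2).2 (hu k)
      obtain ⟨i₀, -, hiuniq⟩ := hgirep _ hh
      have hipred : ∀ ix : Fin n,
          ((g' * u k * g)⁻¹ * (t k i')⁻¹ * (g'j j₁ * g' * gi ix * g) ∈ U) →
          (g'⁻¹ * (w' k ℓ)⁻¹ * (t k i')⁻¹ * (g'j j₁ * g' * gi ix * g) * g⁻¹ ∈ U') →
          (gi ix)⁻¹ * (g'⁻¹ * ((g'j j₁)⁻¹ * (t k i' * w' k ℓ)) * g' * u k) ∈ U' ∧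
          g⁻¹ * ((gi ix)⁻¹ *
            (g'⁻¹ * ((g'j j₁)⁻¹ * (t k i' * w' k ℓ)) * g' * u k)) * g ∈ U := by
        intro ix h1 h2
        constructor
        · have e : (gi ix)⁻¹ * (g'⁻¹ * ((g'j j₁)⁻¹ * (t k i' * w' k ℓ)) * g' * u k)
              = (g'⁻¹ * (w' k ℓ)⁻¹ * (t k i')⁻¹ * (g'j j₁ * g' * gi ix * g) * g⁻¹)⁻¹
                * u k := by group
          rw [e]; exact mul_mem (inv_mem h2) (hu k)
        · have e : g⁻¹ * ((gi ix)⁻¹ *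
              (g'⁻¹ * ((g'j j₁)⁻¹ * (t k i' * w' k ℓ)) * g' * u k)) * g
              = (((g' * u k * g)⁻¹ * (w' k ℓ)⁻¹ * (g' * u k * g)) *
                ((g' * u k * g)⁻¹ * (t k i')⁻¹ * (g'j j₁ * g' * gi ix * g)))⁻¹ := by group
          rw [e]; exact inv_mem (mul_mem (conj_inv_mem U (hw'2 k ℓ)) h1)
      exact ⟨rfl, (hiuniq i₁ (hipred i₁ hx1 hx2)).trans (hiuniq i₂ (hipred i₂ hy1 hy2)).symm⟩
    rw [LinearMap.sum_apply]
    simp only [LinearMap.sum_apply, map_sum, hcomp, DCaux.comp_sum, DCaux.map_sum_right]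
    have H5 : ∀ (j : Fin m) (i : Fin n) (x : Σ k : Fin s, Fin (q k) × Fin (mk k)),
        (((g' * u x.1 * g)⁻¹ * (t x.1 x.2.1)⁻¹ * (g'j j * g' * gi i * g) ∈ U) ∧
         (g'⁻¹ * (w' x.1 x.2.2)⁻¹ * (t x.1 x.2.1)⁻¹ * (g'j j * g' * gi i * g) * g⁻¹ ∈ U')) →
        TensorProduct.map (DistribMulAction.toLinearMap R M (g'j j * g' * (gi i * g)))
          ((DistribMulAction.toLinearMap R V'' (⟨g'j j, hg'j j⟩ : U'') ∘ₗ τ') ∘ₗ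
            DistribMulAction.toLinearMap R V' (⟨gi i, hgi i⟩ : U') ∘ₗ τ) z
        = TensorProduct.map
            (DistribMulAction.toLinearMap R M (t x.1 x.2.1 * (g' * u x.1 * g)))
            (DistribMulAction.toLinearMap R V'' (⟨t x.1 x.2.1, ht1 x.1 x.2.1⟩ : U'') ∘ₗ
              DistribMulAction.toLinearMap R V'' (⟨w' x.1 x.2.2, hw'1 x.1 x.2.2⟩ : U'') ∘ₗ
                τ' ∘ₗ DistribMulAction.toLinearMap R V' (⟨u x.1, hu x.1⟩ : U') ∘ₗ
                  τ ∘ₗ DistribMulAction.toLinearMap R V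
                    (⟨(g' * u x.1 * g)⁻¹ * (w' x.1 x.2.2)⁻¹ * (g' * u x.1 * g),
                      conj_inv_mem U (hw'2 x.1 x.2.2)⟩ : U)) z := by
      rintro j i ⟨k, i', ℓ⟩ ⟨h1, h2⟩
      try dsimp only at h1
      try dsimp only at h2
      try dsimp only
      conv_rhs => rw [← hshift (t k i' * (g' * u k * g)) _ _ h1]
      have eA : DistribMulAction.toLinearMap R M (g'j j * g' * (gi i * g))
          = DistribMulAction.toLinearMap R M (t k i' * (g' * u k * g) *
              ((g' * u k * g)⁻¹ * (t k i')⁻¹ * (g'j j * g' * gi i * g))) := by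
        rw [show g'j j * g' * (gi i * g) = t k i' * (g' * u k * g) *
          ((g' * u k * g)⁻¹ * (t k i')⁻¹ * (g'j j * g' * gi i * g)) by group]
      rw [eA]
      congr 2
      have hb''U' : (u k)⁻¹ *
          (g'⁻¹ * (w' k ℓ)⁻¹ * (t k i')⁻¹ * (g'j j * g' * gi i * g) * g⁻¹) ∈ U' :=
        mul_mem (inv_mem (hu k)) h2
      have hb''C : g⁻¹ * ((u k)⁻¹ *
          (g'⁻¹ * (w' k ℓ)⁻¹ * (t k i')⁻¹ * (g'j j * g' * gi i * g) * g⁻¹)) * g ∈ U := by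
        rw [show g⁻¹ * ((u k)⁻¹ *
            (g'⁻¹ * (w' k ℓ)⁻¹ * (t k i')⁻¹ * (g'j j * g' * gi i * g) * g⁻¹)) * g
          = ((g' * u k * g)⁻¹ * (w' k ℓ)⁻¹ * (g' * u k * g)) *
            ((g' * u k * g)⁻¹ * (t k i')⁻¹ * (g'j j * g' * gi i * g)) by group]
        exact mul_mem (conj_inv_mem U (hw'2 k ℓ)) h1
      have ha'U' : g'⁻¹ * ((g'j j)⁻¹ * (t k i' * w' k ℓ)) * g' ∈ U' := by
        rw [show g'⁻¹ * ((g'j j)⁻¹ * (t k i' * w' k ℓ)) * g'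
          = gi i *
            (g'⁻¹ * (w' k ℓ)⁻¹ * (t k i')⁻¹ * (g'j j * g' * gi i * g) * g⁻¹)⁻¹ by group]
        exact mul_mem (hgi i) (inv_mem h2)
      have hA'U'' : (g'j j)⁻¹ * (t k i' * w' k ℓ) ∈ U'' :=
        mul_mem (inv_mem (hg'j j)) (mul_mem (ht1 k i') (hw'1 k ℓ))
      ext v
      simp only [LinearMap.coe_comp, Function.comp_apply,
        DistribMulAction.toLinearMap, DistribSMul.toLinearMap_apply]
      rw [DCaux.mk_smul_mk_smul U (conj_inv_mem U (hw'2 k ℓ)) h1 v,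
        DCaux.smul_eq_of_eq U
          (show (g' * u k * g)⁻¹ * (w' k ℓ)⁻¹ * (g' * u k * g) *
              ((g' * u k * g)⁻¹ * (t k i')⁻¹ * (g'j j * g' * gi i * g))
            = g⁻¹ * ((u k)⁻¹ *
              (g'⁻¹ * (w' k ℓ)⁻¹ * (t k i')⁻¹ * (g'j j * g' * gi i * g) * g⁻¹)) * g
            by group) _ hb''C v,
        hτ _ hb''U' hb''C v,
        DCaux.mk_smul_mk_smul U' (hu k) hb''U',
        DCaux.smul_eq_of_eq U'
          (show gi i = (g'⁻¹ * ((g'j j)⁻¹ * (t k i' * w' k ℓ)) * g') *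
              (u k * ((u k)⁻¹ *
                (g'⁻¹ * (w' k ℓ)⁻¹ * (t k i')⁻¹ * (g'j j * g' * gi i * g) * g⁻¹)))
            by group) (hgi i) (mul_mem ha'U' (mul_mem (hu k) hb''U')) (τ v),
        ← DCaux.mk_smul_mk_smul U' ha'U' (mul_mem (hu k) hb''U'),
        hτ' ((g'j j)⁻¹ * (t k i' * w' k ℓ)) hA'U'' ha'U',
        DCaux.mk_smul_mk_smul U'' (hg'j j) hA'U'',
        DCaux.mk_smul_mk_smul U'' (ht1 k i') (hw'1 k ℓ)]
      exact DCaux.smul_eq_of_eq U'' (by group) _ _ _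
    rw [← Finset.sum_product']
    conv_rhs => enter [2, k]; rw [← Finset.sum_product']
    rw [Finset.sum_sigma']
    simp only [Finset.univ_product_univ, Finset.univ_sigma_univ]
    refine Finset.sum_nbij' (fun p => (H1 p.1 p.2).choose)
      (fun x => ((H3 x).choose, (H3 x).choose_spec.choose))
      (fun _ _ => Finset.mem_univ _) (fun _ _ => Finset.mem_univ _) ?_ ?_ ?_
    · intro p _
      obtain ⟨h1, h2⟩ := (H1 p.1 p.2).choose_spec
      obtain ⟨h1', h2'⟩ := (H3 (H1 p.1 p.2).choose).choose_spec.choose_spec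
      have hmain := H4 ((H1 p.1 p.2).choose) _ p.1 _ p.2 ⟨h1', h2'⟩ ⟨h1, h2⟩
      exact Prod.ext hmain.1 hmain.2
    · intro x _
      obtain ⟨h1, h2⟩ := (H3 x).choose_spec.choose_spec
      obtain ⟨h1', h2'⟩ := (H1 (H3 x).choose (H3 x).choose_spec.choose).choose_spec
      exact H2 _ _ _ _ ⟨h1', h2'⟩ ⟨h1, h2⟩
    · intro p _
      exact H5 p.1 p.2 (H1 p.1 p.2).choose (H1 p.1 p.2).choose_spec
end

section
/- Let K be a field of characteristic zero, n ≥ 1 an integer, and A ∈ Mₙ(K[[t]]) a matrix of formal power series whose constant term A(0) ∈ Mₙ(K) is nilpotent. Then the K-linear map from (K[[t]])ⁿ to itself sending f to A·f + f + t·f′ (where f′ denotes the componentwise formal derivative) is bijective; that is, for every g ∈ (K[[t]])ⁿ there is a unique f ∈ (K[[t]])ⁿ with (A + I)·f + t·f′ = g. -/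
open PowerSeries Finset

section Aux

variable {K : Type*} [Field K] {n : ℕ}

private noncomputable def Bmat (A : Matrix (Fin n) (Fin n) (PowerSeries K)) (p : ℕ) :
    Matrix (Fin n) (Fin n) K :=
  fun i j => coeff p (A i j)

private lemma coeff_X_mul_deriv (g : PowerSeries K) (k : ℕ) :
    coeff k (X * derivativeFun g) = (k : K) * coeff k g := by
  cases k with
  | zero => simp
  | succ m => rw [coeff_succ_X_mul, show derivativeFun g = derivative K g from rfl, coeff_derivative]; push_cast; ring

private lemma coeff_mulVec (A : Matrix (Fin n) (Fin n) (PowerSeries K))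
    (f : Fin n → PowerSeries K) (k : ℕ) (i : Fin n) :
    coeff k (A.mulVec f i) =
      ∑ q ∈ range (k + 1), ((Bmat A q).mulVec fun j => coeff (k - q) (f j)) i := by
  have h0 : A.mulVec f i = ∑ j, A i j * f j := rfl
  rw [h0, map_sum]
  have h1 : ∀ j : Fin n, coeff k (A i j * f j) =
      ∑ q ∈ range (k + 1), coeff q (A i j) * coeff (k - q) (f j) := by
    intro j
    rw [PowerSeries.coeff_mul, Finset.Nat.sum_antidiagonal_eq_sum_range_succ_mk]
  simp only [h1]
  rw [Finset.sum_comm]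
  simp [Matrix.mulVec, dotProduct, Bmat]

/-- Full coefficient formula for the operator. -/
private lemma coeff_T (A : Matrix (Fin n) (Fin n) (PowerSeries K))
    (f : Fin n → PowerSeries K) (k : ℕ) :
    (fun i => coeff k ((A.mulVec f + f + (fun i => X * derivativeFun (f i)) : Fin n → PowerSeries K) i)) =
      (Bmat A 0 + ((k + 1 : ℕ) : K) • 1).mulVec (fun j => coeff k (f j)) +
        ∑ q ∈ range k, (Bmat A (q + 1)).mulVec (fun j => coeff (k - 1 - q) (f j)) := by
  funext i
  simp only [Pi.add_apply, map_add, coeff_mulVec, coeff_X_mul_deriv]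
  rw [Finset.sum_range_succ']
  have hre : ∀ q ∈ range k, ((Bmat A (q + 1)).mulVec fun j => coeff (k - (q + 1)) (f j)) i
      = ((Bmat A (q + 1)).mulVec fun j => coeff (k - 1 - q) (f j)) i := by
    intro q hq
    have : k - (q + 1) = k - 1 - q := by omega
    rw [this]
  rw [Finset.sum_congr rfl hre]
  simp only [Matrix.add_mulVec, Matrix.smul_mulVec, Matrix.one_mulVec, Pi.add_apply,
    Pi.smul_apply, smul_eq_mul, Finset.sum_apply, Nat.sub_zero]
  push_cast
  ring

end Aux

private noncomputable def solveCoeffs {K : Type*} [Field K] {n : ℕ}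
    (B : ℕ → Matrix (Fin n) (Fin n) K) (g : ℕ → Fin n → K) (k : ℕ) : Fin n → K :=
  (Ring.inverse (B 0 + ((k + 1 : ℕ) : K) • 1)).mulVec
    (g k - ∑ q ∈ (Finset.range k).attach,
      (B (q.1 + 1)).mulVec (solveCoeffs B g (k - 1 - q.1)))
termination_by k
decreasing_by
  have hq := Finset.mem_range.mp q.2
  omega

open PowerSeries

/-- Let `K` be a field of characteristic zero, `n ≥ 1`, and `A` an `n × n` matrix of formal
power series over `K` whose constant-term matrix is nilpotent.  Then the map
`f ↦ A·f + f + t·f′` from `(K[[t]])ⁿ` to itself is bijective: every `g` has a unique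
preimage `f` with `(A + I)·f + t·f′ = g`. -/
theorem gaussManin_formal_solvability (K : Type*) [Field K] [CharZero K]
    (n : ℕ) (hn : 1 ≤ n) (A : Matrix (Fin n) (Fin n) (PowerSeries K))
    (hnil : IsNilpotent (fun i j => PowerSeries.constantCoeff (A i j) :
      Matrix (Fin n) (Fin n) K)) :
    Function.Bijective (fun f : Fin n → PowerSeries K =>
      A.mulVec f + f + fun i => PowerSeries.X * PowerSeries.derivativeFun (f i)) := by
  have hB0 : Bmat A 0 = 0 := by
    obtain ⟨m, hm⟩ := hnil
    rcases Nat.eq_zero_or_pos m with hm0 | hm0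
    · subst hm0
      have := congrFun (congrFun hm ⟨0, hn⟩) ⟨0, hn⟩
      simp at this
    · funext i j
      have := congrFun (congrFun hm i) j
      simp only [Pi.pow_apply, Pi.zero_apply] at this
      have h0 : PowerSeries.constantCoeff (A i j) = 0 :=
        pow_eq_zero_iff hm0.ne' |>.mp this
      simp [Bmat, PowerSeries.coeff_zero_eq_constantCoeff, h0]
  have hU : ∀ k : ℕ, IsUnit (Bmat A 0 + ((k + 1 : ℕ) : K) • (1 : Matrix (Fin n) (Fin n) K)) := by
    intro k
    rw [hB0, zero_add]
    have hc : ((k + 1 : ℕ) : K) ≠ 0 := Nat.cast_ne_zero.mpr (Nat.succ_ne_zero k)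
    refine isUnit_iff_exists.mpr ⟨((k + 1 : ℕ) : K)⁻¹ • (1 : Matrix (Fin n) (Fin n) K), ?_, ?_⟩
    · rw [smul_mul_smul_comm, mul_inv_cancel₀ hc, one_mul, one_smul]
    · rw [smul_mul_smul_comm, inv_mul_cancel₀ hc, one_mul, one_smul]
  -- uniqueness of coefficients
  have key : ∀ (f g : Fin n → PowerSeries K),
      (A.mulVec f + f + fun i => X * derivativeFun (f i)) = g →
      ∀ k, (fun j => coeff k (f j)) =
        solveCoeffs (Bmat A) (fun k j => coeff k (g j)) k := by
    intro f g hfg k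
    induction k using Nat.strong_induction_on with
    | _ k ih =>
      have h1 := coeff_T A f k
      rw [hfg] at h1
      rw [solveCoeffs]
      rw [Finset.sum_attach (Finset.range k)
        (fun q => (Bmat A (q + 1)).mulVec (solveCoeffs (Bmat A)
          (fun k j => coeff k (g j)) (k - 1 - q)))]
      have hsum : ∑ q ∈ Finset.range k, (Bmat A (q + 1)).mulVec
            (solveCoeffs (Bmat A) (fun k j => coeff k (g j)) (k - 1 - q)) =
          ∑ q ∈ Finset.range k, (Bmat A (q + 1)).mulVec
            (fun j => coeff (k - 1 - q) (f j)) := by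
        refine Finset.sum_congr rfl fun q hq => ?_
        rw [ih (k - 1 - q) (by have := Finset.mem_range.mp hq; omega)]
      rw [hsum]
      have h2 : (Bmat A 0 + ((k + 1 : ℕ) : K) • 1).mulVec (fun j => coeff k (f j)) =
          (fun j => coeff k (g j)) -
            ∑ q ∈ Finset.range k, (Bmat A (q + 1)).mulVec (fun j => coeff (k - 1 - q) (f j)) := by
        rw [h1]; abel
      rw [← h2, Matrix.mulVec_mulVec, Ring.inverse_mul_cancel _ (hU k), Matrix.one_mulVec]
  constructor
  · intro f f' hff'
    funext i
    ext k
    have h1 := key f _ rfl k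
    have h2 := key f' _ hff'.symm k
    have := h1.trans h2.symm
    exact congrFun this i
  · intro g
    set F := solveCoeffs (Bmat A) (fun k j => coeff k (g j)) with hF
    refine ⟨fun i => PowerSeries.mk (fun k => F k i), ?_⟩
    funext i
    ext k
    have hc : (fun j => coeff k ((fun i => PowerSeries.mk (fun k => F k i)) j)) = F k := by
      funext j; simp [coeff_mk]
    have h1 := congrFun (coeff_T A (fun i => PowerSeries.mk (fun k => F k i)) k) i
    rw [h1]
    have hcq : ∀ q, (fun j => coeff (k - 1 - q)
        ((fun i => PowerSeries.mk (fun k => F k i)) j)) = F (k - 1 - q) := by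
      intro q; funext j; simp [coeff_mk]
    simp only [hc, hcq]
    have hFk : F k = (Ring.inverse (Bmat A 0 + ((k + 1 : ℕ) : K) • 1)).mulVec
        ((fun j => coeff k (g j)) -
          ∑ q ∈ Finset.range k, (Bmat A (q + 1)).mulVec (F (k - 1 - q))) := by
      rw [hF]
      conv_lhs => rw [solveCoeffs]
      rw [Finset.sum_attach (Finset.range k)
        (fun q => (Bmat A (q + 1)).mulVec (solveCoeffs (Bmat A)
          (fun k j => coeff k (g j)) (k - 1 - q)))]
    have := congrFun (by
      rw [hFk, Matrix.mulVec_mulVec, Ring.mul_inverse_cancel _ (hU k), Matrix.one_mulVec]; abel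
      : (Bmat A 0 + ((k + 1 : ℕ) : K) • 1).mulVec (F k) +
          ∑ q ∈ Finset.range k, (Bmat A (q + 1)).mulVec (F (k - 1 - q)) =
        (fun j => coeff k (g j))) i
    simpa using this
end

section
/- Let O be a principal ideal domain, L a finitely generated free O-module, and b : L × L → O an O-bilinear form such that the induced map L → Hom_O(L, O), x ↦ b(x, −), is an isomorphism. Let L₁ ⊆ L be a submodule such that L/L₁ is torsion-free, set L₂ := {x ∈ L : b(x, y) = 0 for all y ∈ L₁}, and assume L₁ ∩ L₂ = 0. Then the quotient L/(L₁ + L₂) is isomorphic as an O-module to the cokernel of the map L₁ → Hom_O(L₁, O) given by x ↦ b(x, −)|_{L₁}. In particular, if L₁ is free of rank 2 with basis (e₁, e₂) and the restriction of b to L₁ is alternating with b(e₁, e₂) = η, then L/(L₁ + L₂) is isomorphic to (O/ηO)². -/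
/-- Let `O` be a PID, `L` a finitely generated free `O`-module, and `b` a bilinear form on
`L` inducing an isomorphism `L ≅ Hom_O(L, O)`.  Let `L₁ ⊆ L` be a submodule with
torsion-free quotient, let `L₂` be the orthogonal complement of `L₁`, and assume
`L₁ ∩ L₂ = 0`.  Then `L/(L₁ + L₂)` is isomorphic to the cokernel of the induced map
`L₁ → Hom_O(L₁, O)`; in particular, if `L₁` is free of rank `2` with basis `(e₁, e₂)` and
`b` restricted to `L₁` is alternating with `b(e₁, e₂) = η`, then `L/(L₁ + L₂) ≅ (O/ηO)²`. -/
theorem congruence_module_iso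
    (O : Type*) [CommRing O] [IsDomain O] [IsPrincipalIdealRing O]
    (L : Type*) [AddCommGroup L] [Module O L] [Module.Free O L] [Module.Finite O L]
    (b : L →ₗ[O] L →ₗ[O] O) (hb : Function.Bijective b)
    (L₁ L₂ : Submodule O L)
    (htf : NoZeroSMulDivisors O (L ⧸ L₁))
    (hL₂ : ∀ x : L, x ∈ L₂ ↔ ∀ y ∈ L₁, b x y = 0)
    (hinter : L₁ ⊓ L₂ = ⊥) :
    Nonempty ((L ⧸ (L₁ ⊔ L₂)) ≃ₗ[O]
      ((↥L₁ →ₗ[O] O) ⧸ LinearMap.range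
        ((LinearMap.domRestrict' L₁).comp (b.domRestrict L₁)))) ∧
    ∀ (e : Module.Basis (Fin 2) O ↥L₁) (η : O),
      (∀ x ∈ L₁, b x x = 0) → b ((e 0 : ↥L₁) : L) ((e 1 : ↥L₁) : L) = η →
      Nonempty ((L ⧸ (L₁ ⊔ L₂)) ≃ₗ[O]
        ((O ⧸ Ideal.span {η}) × (O ⧸ Ideal.span {η}))) := by
  classical
  have hfree : Module.Free O (L ⧸ L₁) := Module.free_of_finite_type_torsion_free'
  obtain ⟨s, hs⟩ := Module.projective_lifting_property L₁.mkQ LinearMap.id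
    (Submodule.mkQ_surjective L₁)
  have hsid : ∀ y, L₁.mkQ (s y) = y := fun y => LinearMap.congr_fun hs y
  have hmem : ∀ x : L, x - s (L₁.mkQ x) ∈ L₁ := by
    intro x
    rw [← Submodule.Quotient.mk_eq_zero, ← Submodule.mkQ_apply, map_sub, hsid, sub_self]
  set r : L →ₗ[O] L₁ := (LinearMap.id - s ∘ₗ L₁.mkQ).codRestrict L₁ hmem with hr
  have hrval : ∀ x : L, (r x : L) = x - s (L₁.mkQ x) := fun x => rfl
  have hrL₁ : ∀ x : L₁, r (x : L) = x := by
    intro x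
    apply Subtype.ext
    have h0 : L₁.mkQ (x : L) = 0 := (Submodule.Quotient.mk_eq_zero L₁).mpr x.2
    rw [hrval, h0, map_zero, sub_zero]
  set res : (L →ₗ[O] O) →ₗ[O] (↥L₁ →ₗ[O] O) := LinearMap.domRestrict' L₁ with hres
  have hres_surj : Function.Surjective res := by
    intro g
    refine ⟨g ∘ₗ r, ?_⟩
    ext x
    show g (r (x : L)) = g x
    rw [hrL₁]
  set Φ : L →ₗ[O] (↥L₁ →ₗ[O] O) := res ∘ₗ b with hΦ
  have hΦ_surj : Function.Surjective Φ := hres_surj.comp hb.surjective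
  have hΦ_apply : ∀ (x : L) (y : L₁), Φ x y = b x (y : L) := fun _ _ => rfl
  set Q : ↥L₁ →ₗ[O] (↥L₁ →ₗ[O] O) :=
    (LinearMap.domRestrict' L₁).comp (b.domRestrict L₁) with hQ
  have hQΦ : ∀ x : L₁, Q x = Φ (x : L) := fun _ => rfl
  have hkerΦ : ∀ x : L, Φ x = 0 ↔ x ∈ L₂ := by
    intro x
    rw [hL₂]
    constructor
    · intro h y hy
      exact LinearMap.congr_fun h ⟨y, hy⟩
    · intro h
      ext y
      exact h (y : L) y.2
  set ψ : L →ₗ[O] ((↥L₁ →ₗ[O] O) ⧸ LinearMap.range Q) :=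
    (LinearMap.range Q).mkQ ∘ₗ Φ with hψ
  have hψ_surj : Function.Surjective ψ :=
    (Submodule.mkQ_surjective _).comp hΦ_surj
  have hker : LinearMap.ker ψ = L₁ ⊔ L₂ := by
    ext x
    have : ψ x = 0 ↔ Φ x ∈ LinearMap.range Q := by
      rw [hψ]
      simp only [LinearMap.comp_apply, Submodule.mkQ_apply, Submodule.Quotient.mk_eq_zero]
    rw [LinearMap.mem_ker, this]
    constructor
    · rintro ⟨x₁, hx₁⟩
      have h2 : x - (x₁ : L) ∈ L₂ := by
        rw [← hkerΦ, map_sub, ← hQΦ, hx₁, sub_self]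
      have hx : x = (x₁ : L) + (x - (x₁ : L)) := by abel
      rw [hx]
      exact Submodule.add_mem _ (Submodule.mem_sup_left x₁.2) (Submodule.mem_sup_right h2)
    · intro hx
      obtain ⟨a, ha, c, hc, rfl⟩ := Submodule.mem_sup.mp hx
      refine ⟨⟨a, ha⟩, ?_⟩
      rw [hQΦ, map_add, (hkerΦ c).mpr hc, add_zero]
  have iso1 : (L ⧸ (L₁ ⊔ L₂)) ≃ₗ[O] ((↥L₁ →ₗ[O] O) ⧸ LinearMap.range Q) :=
    (Submodule.quotEquivOfEq _ _ hker.symm).trans (ψ.quotKerEquivOfSurjective hψ_surj)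
  refine ⟨⟨iso1⟩, ?_⟩
  intro e η halt hη
  have h00 : b ((e 0 : L₁) : L) ((e 0 : L₁) : L) = 0 := halt _ (e 0).2
  have h11 : b ((e 1 : L₁) : L) ((e 1 : L₁) : L) = 0 := halt _ (e 1).2
  have h10 : b ((e 1 : L₁) : L) ((e 0 : L₁) : L) = -η := by
    have h := halt ((e 0 : L₁) + (e 1 : L₁)) (L₁.add_mem (e 0).2 (e 1).2)
    simp only [map_add, LinearMap.add_apply] at h
    linear_combination h - hη - h00 - h11
  have hrepr : ∀ x : L₁, x = e.repr x 0 • e 0 + e.repr x 1 • e 1 := by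
    intro x
    have h := e.sum_repr x
    rw [Fin.sum_univ_two] at h
    exact h.symm
  set I : Ideal O := Ideal.span {η} with hI
  set χ : (↥L₁ →ₗ[O] O) →ₗ[O] (O ⧸ I) × (O ⧸ I) :=
    (I.mkQ ∘ₗ LinearMap.applyₗ (e 0)).prod (I.mkQ ∘ₗ LinearMap.applyₗ (e 1)) with hχ
  have hχ_apply : ∀ f : ↥L₁ →ₗ[O] O,
      χ f = (I.mkQ (f (e 0)), I.mkQ (f (e 1))) := fun f => rfl
  have hχ_surj : Function.Surjective χ := by
    rintro ⟨y0, y1⟩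
    obtain ⟨a0, rfl⟩ := Submodule.mkQ_surjective I y0
    obtain ⟨a1, rfl⟩ := Submodule.mkQ_surjective I y1
    refine ⟨a0 • e.coord 0 + a1 • e.coord 1, ?_⟩
    rw [hχ_apply]
    simp [Module.Basis.coord_apply, Module.Basis.repr_self_apply]
  have hQ_apply : ∀ x y : L₁, Q x y = b (x : L) (y : L) := fun _ _ => rfl
  have hkerχ : LinearMap.ker χ = LinearMap.range Q := by
    ext f
    rw [LinearMap.mem_ker, hχ_apply, Prod.mk_eq_zero, Submodule.mkQ_apply,
      Submodule.mkQ_apply, Submodule.Quotient.mk_eq_zero, Submodule.Quotient.mk_eq_zero,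
      hI, Ideal.mem_span_singleton, Ideal.mem_span_singleton]
    constructor
    · rintro ⟨⟨a, hfa⟩, ⟨c, hfc⟩⟩
      refine ⟨c • e 0 - a • e 1, ?_⟩
      refine e.ext fun i => ?_
      rw [hQ_apply]
      have hcoe : ((c • e 0 - a • e 1 : L₁) : L) = c • ((e 0 : L₁) : L) - a • ((e 1 : L₁) : L) := rfl
      rw [hcoe, map_sub, map_smul, map_smul]
      fin_cases i
      · simp only [Fin.zero_eta, Fin.isValue, LinearMap.sub_apply, LinearMap.smul_apply, h00, h10, smul_eq_mul]
        rw [hfa]; ring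
      · simp only [Fin.mk_one, Fin.isValue, LinearMap.sub_apply, LinearMap.smul_apply, h11, hη, smul_eq_mul]
        rw [hfc]; ring
    · rintro ⟨x, rfl⟩
      constructor
      · refine ⟨-(e.repr x 1), ?_⟩
        rw [hQ_apply]
        conv_lhs => rw [hrepr x]
        have hcoe : ((e.repr x 0 • e 0 + e.repr x 1 • e 1 : L₁) : L)
            = e.repr x 0 • ((e 0 : L₁) : L) + e.repr x 1 • ((e 1 : L₁) : L) := rfl
        rw [hcoe, map_add, map_smul, map_smul]
        simp only [LinearMap.add_apply, LinearMap.smul_apply, h00, h10, smul_eq_mul]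
        ring
      · refine ⟨e.repr x 0, ?_⟩
        rw [hQ_apply]
        conv_lhs => rw [hrepr x]
        have hcoe : ((e.repr x 0 • e 0 + e.repr x 1 • e 1 : L₁) : L)
            = e.repr x 0 • ((e 0 : L₁) : L) + e.repr x 1 • ((e 1 : L₁) : L) := rfl
        rw [hcoe, map_add, map_smul, map_smul]
        simp only [LinearMap.add_apply, LinearMap.smul_apply, h11, hη, smul_eq_mul]
        ring
  have iso2 : ((↥L₁ →ₗ[O] O) ⧸ LinearMap.range Q) ≃ₗ[O] (O ⧸ I) × (O ⧸ I) :=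
    (Submodule.quotEquivOfEq _ _ hkerχ.symm).trans (χ.quotKerEquivOfSurjective hχ_surj)
  exact ⟨iso1.trans iso2⟩
end

section
/- For positive integers N and N' with N dividing N', the index of U_{N'} in U₀(N) equals φ(N')·φ(N)·[Γ₁(N) : Γ(N')], where φ is Euler's totient function, Γ₁(N) and Γ(N') are the congruence subgroups of SL₂(ℤ) (Γ₁(N) the matrices congruent to (1 *; 0 1) mod N, Γ(N') the matrices congruent to the identity mod N'), and [Γ₁(N) : Γ(N')] is the index of Γ(N') in Γ₁(N). -/
open CongruenceSubgroup

instance (p : Nat.Primes) : Fact (p : ℕ).Prime := ⟨p.2⟩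

/-- `Ẑ = ∏_p ℤ_p`, the product of the rings of `p`-adic integers over all primes. -/
def Zhat : Type := ∀ p : Nat.Primes, ℤ_[(p : ℕ)]

noncomputable instance : CommRing Zhat := Pi.commRing

/-- The principal congruence subgroup of level `M` in `GL₂(R)`: invertible matrices `u`
(with integral inverse) congruent to `1` modulo `M·M₂(R)`. -/
def CongSubgroup (R : Type*) [CommRing R] (M : R) : Subgroup (GL (Fin 2) R) where
  carrier := {u | ∀ i j, M ∣ ((↑u : Matrix (Fin 2) (Fin 2) R) - 1) i j}
  one_mem' := by
    intro i j
    simp [Matrix.sub_apply]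
  mul_mem' := by
    intro a b ha hb i j
    have key : ((↑(a * b) : Matrix (Fin 2) (Fin 2) R) - 1) =
        ((↑a : Matrix (Fin 2) (Fin 2) R) - 1) * ((↑b : Matrix (Fin 2) (Fin 2) R) - 1) +
          (((↑a : Matrix (Fin 2) (Fin 2) R) - 1) +
            ((↑b : Matrix (Fin 2) (Fin 2) R) - 1)) := by
      rw [Units.val_mul]
      noncomm_ring
    rw [key]
    simp only [Matrix.add_apply, Matrix.mul_apply]
    exact dvd_add (Finset.dvd_sum fun k _ => (ha i k).mul_right _)
      (dvd_add (ha i j) (hb i j))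
  inv_mem' := by
    intro a ha i j
    have h2 : (↑a⁻¹ : Matrix (Fin 2) (Fin 2) R) * (↑a : Matrix (Fin 2) (Fin 2) R) = 1 := by
      rw [← Units.val_mul, inv_mul_cancel, Units.val_one]
    have key : ((↑a⁻¹ : Matrix (Fin 2) (Fin 2) R) - 1) =
        (↑a⁻¹ : Matrix (Fin 2) (Fin 2) R) * (1 - (↑a : Matrix (Fin 2) (Fin 2) R)) := by
      rw [Matrix.mul_sub, Matrix.mul_one, h2]
    rw [key, Matrix.mul_apply]
    refine Finset.dvd_sum fun k _ => Dvd.dvd.mul_left ?_ _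
    have h3 : ((1 : Matrix (Fin 2) (Fin 2) R) - ↑a) k j =
        -(((↑a : Matrix (Fin 2) (Fin 2) R) - 1) k j) := by
      simp [Matrix.sub_apply]
    rw [h3]
    exact dvd_neg.mpr (ha k j)

/-- The subgroup `U₀(N)` of `GL₂(R)` of matrices whose `(2,1)`-entry lies in `N·R`. -/
def U0Subgroup (R : Type*) [CommRing R] (N : R) : Subgroup (GL (Fin 2) R) where
  carrier := {u | N ∣ (↑u : Matrix (Fin 2) (Fin 2) R) 1 0}
  one_mem' := by
    simp only [Set.mem_setOf_eq, Units.val_one, Matrix.one_apply_ne (by decide : (1 : Fin 2) ≠ 0)]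
    exact dvd_zero _
  mul_mem' := by
    intro a b ha hb
    simp only [Set.mem_setOf_eq, Units.val_mul, Matrix.mul_apply, Fin.sum_univ_two] at *
    exact dvd_add (ha.mul_right _) (hb.mul_left _)
  inv_mem' := by
    intro a ha
    simp only [Set.mem_setOf_eq] at *
    rw [Matrix.coe_units_inv, Matrix.inv_def, Matrix.smul_apply, Matrix.adjugate_fin_two,
      smul_eq_mul]
    show N ∣ _ * (-(↑a : Matrix (Fin 2) (Fin 2) R) 1 0)
    exact (dvd_neg.mpr ha).mul_left _

lemma isUnit_padic_natCast_of_not_dvd (p : ℕ) [Fact p.Prime] {m : ℕ} (h : ¬ p ∣ m) :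
    IsUnit (m : ℤ_[p]) := by
  rw [PadicInt.isUnit_iff]
  refine le_antisymm (PadicInt.norm_le_one _) (not_lt.mp fun hlt => h ?_)
  have : ‖((m : ℤ) : ℤ_[p])‖ < 1 := by push_cast; exact hlt
  rw [PadicInt.norm_int_lt_one_iff_dvd] at this
  exact_mod_cast this

lemma isUnit_of_isUnit_toZModPow (p : ℕ) [Fact p.Prime] {n : ℕ} (hn : n ≠ 0) {x : ℤ_[p]}
    (h : IsUnit (PadicInt.toZModPow n x)) : IsUnit x := by
  by_contra hx
  have h1 : ‖x‖ < 1 :=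
    lt_of_le_of_ne (PadicInt.norm_le_one x) fun e => hx (PadicInt.isUnit_iff.mpr e)
  obtain ⟨y, rfl⟩ := (PadicInt.norm_lt_one_iff_dvd x).mp h1
  rw [map_mul, map_natCast] at h
  have hp : IsUnit ((p : ZMod (p ^ n))) := isUnit_of_mul_isUnit_left h
  rw [ZMod.isUnit_iff_coprime, Nat.Coprime, Nat.gcd_eq_left (dvd_pow_self p hn)] at hp
  exact (Fact.out : p.Prime).one_lt.ne' hp

lemma zmod_dvd_iff_castHom_eq_zero {N N' : ℕ} [NeZero N] [NeZero N'] (h : N ∣ N')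
    (x : ZMod N') : (N : ZMod N') ∣ x ↔ ZMod.castHom h (ZMod N) x = 0 := by
  constructor
  · rintro ⟨y, rfl⟩
    rw [map_mul, map_natCast, ZMod.natCast_self, zero_mul]
  · intro hx
    obtain ⟨m, rfl⟩ := ZMod.natCast_zmod_surjective (n := N') x
    rw [map_natCast, ZMod.natCast_eq_zero_iff] at hx
    obtain ⟨k, rfl⟩ := hx
    exact ⟨(k : ZMod N'), by push_cast; ring⟩

lemma exists_isCoprime_lift (M : ℕ) (hM : M ≠ 0) {a b c d : ℤ}
    (h : (M : ℤ) ∣ a * d - b * c - 1) :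
    ∃ c' d' : ℤ, (M : ℤ) ∣ c' - c ∧ (M : ℤ) ∣ d' - d ∧ IsCoprime c' d' := by
  classical
  set c' : ℤ := if c = 0 then (M : ℤ) else c with hc'def
  have hc'c : (M : ℤ) ∣ c' - c := by
    by_cases h0 : c = 0 <;> simp [hc'def, h0]
  have hc'0 : c' ≠ 0 := by
    by_cases h0 : c = 0 <;> simp [hc'def, h0]
    exact_mod_cast hM
  have key : ∀ q : ℕ, q.Prime → (q : ℤ) ∣ c' → (q : ℤ) ∣ d → ¬ (q : ℤ) ∣ (M : ℤ) := by
    intro q hq hqc' hqd hqM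
    have hqc : (q : ℤ) ∣ c := by
      have := dvd_sub hqc' (hqM.trans hc'c)
      simpa using this
    have h1 : (q : ℤ) ∣ 1 := by
      have := dvd_sub (dvd_sub (hqd.mul_left a) (hqc.mul_left b)) (hqM.trans h)
      have e : a * d - b * c - (a * d - b * c - 1) = (1 : ℤ) := by ring
      rw [e] at this; exact this
    have := Int.le_of_dvd one_pos h1
    have := hq.one_lt
    omega
  set S : Finset ℕ := c'.natAbs.primeFactors.filter (fun q => ¬ (q : ℤ) ∣ d) with hS
  set t : ℕ := S.prod id with ht
  refine ⟨c', d + (M : ℤ) * t, hc'c, ⟨t, by ring⟩, ?_⟩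
  rw [Int.isCoprime_iff_gcd_eq_one]
  by_contra hg
  obtain ⟨q, hq, hqdvd⟩ := Nat.exists_prime_and_dvd hg
  have hqc' : (q : ℤ) ∣ c' := (Int.natCast_dvd_natCast.mpr hqdvd).trans (Int.gcd_dvd_left _ _)
  have hqd' : (q : ℤ) ∣ d + (M : ℤ) * t := (Int.natCast_dvd_natCast.mpr hqdvd).trans (Int.gcd_dvd_right _ _)
  by_cases hqd : (q : ℤ) ∣ d
  · have hnM : ¬ (q : ℤ) ∣ (M : ℤ) := key q hq hqc' hqd
    have hMt : (q : ℤ) ∣ (M : ℤ) * t := by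
      have := dvd_sub hqd' hqd
      simpa using this
    have : q ∣ M * t := by exact_mod_cast hMt
    rcases hq.dvd_mul.mp this with h' | h'
    · exact hnM (Int.natCast_dvd_natCast.mpr h')
    · obtain ⟨r, hr, hr'⟩ := (hq.prime.dvd_finset_prod_iff id).mp h'
      rw [hS, Finset.mem_filter] at hr
      have : q = r := (Nat.prime_dvd_prime_iff_eq hq (Nat.prime_of_mem_primeFactors hr.1)).mp hr'
      exact hr.2 (this ▸ hqd)
  · have hqS : q ∈ S := by
      rw [hS, Finset.mem_filter]
      refine ⟨Nat.mem_primeFactors.mpr ⟨hq, ?_, Int.natAbs_ne_zero.mpr hc'0⟩, hqd⟩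
      exact Int.natCast_dvd_natCast.mp (Int.natAbs_dvd.mpr hqc' |> fun h' => by
        exact_mod_cast Int.natAbs_dvd_natAbs.mpr hqc')
    have hqt : (q : ℤ) ∣ (M : ℤ) * t := Dvd.dvd.mul_left (by exact_mod_cast Finset.dvd_prod_of_mem id hqS) _
    have : (q : ℤ) ∣ d := by
      have := dvd_sub hqd' hqt
      simpa using this
    exact hqd this

open Matrix in
lemma SL2_map_zmod_surjective (M : ℕ) [NeZero M] :
    Function.Surjective
      (Matrix.SpecialLinearGroup.map (n := Fin 2) (Int.castRingHom (ZMod M))) := by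
  intro g
  set a : ℤ := ((g 0 0).val : ℤ)
  set b : ℤ := ((g 0 1).val : ℤ)
  set c : ℤ := ((g 1 0).val : ℤ)
  set d : ℤ := ((g 1 1).val : ℤ)
  have hcast : ∀ i j, (((g i j).val : ℤ) : ZMod M) = g i j := by
    intro i j; push_cast; exact ZMod.natCast_rightInverse _
  have hdet : g 0 0 * g 1 1 - g 0 1 * g 1 0 = 1 := by
    have := g.prop
    rw [Matrix.det_fin_two] at this
    exact this
  have h : (M : ℤ) ∣ a * d - b * c - 1 := by
    rw [← ZMod.intCast_zmod_eq_zero_iff_dvd]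
    push_cast
    rw [hcast 0 0, hcast 1 1, hcast 0 1, hcast 1 0]
    linear_combination hdet
  obtain ⟨c', d', hcc, hdd, hcop⟩ := exists_isCoprime_lift M (NeZero.ne M) h
  obtain ⟨u, v, huv⟩ := hcop
  obtain ⟨kc, hkc⟩ := hcc
  obtain ⟨kd, hkd⟩ := hdd
  obtain ⟨kz, hkz⟩ := h
  set t0 : ℤ := v * (b + u) + u * (a - v) with ht0
  set D : ℤ := (a - v) * d' - (b + u) * c' with hD
  have hDdvd : (M : ℤ) ∣ D := ⟨kz + a * kd - b * kc, by linear_combination a * hkd - b * hkc + hkz - huv⟩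
  have hA : det !![v + t0 * c', -u + t0 * d'; c', d'] = 1 := by
    rw [Matrix.det_fin_two_of]
    linear_combination huv
  refine ⟨⟨!![v + t0 * c', -u + t0 * d'; c', d'], hA⟩, ?_⟩
  have k00 : (M : ℤ) ∣ v + t0 * c' - a := by
    have he : v + t0 * c' - a = -v * D := by linear_combination (a - v) * huv
    rw [he]; exact hDdvd.mul_left _
  have k01 : (M : ℤ) ∣ -u + t0 * d' - b := by
    have he : -u + t0 * d' - b = u * D := by linear_combination (b + u) * huv
    rw [he]; exact hDdvd.mul_left _
  have entry : ∀ (x y : ℤ), (M : ℤ) ∣ x - y → ((y : ZMod M) = (x : ZMod M)) := by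
    intro x y hxy
    have := (ZMod.intCast_zmod_eq_zero_iff_dvd _ M).mpr hxy
    push_cast at this
    linear_combination -this
  refine Matrix.SpecialLinearGroup.ext _ _ fun i j => ?_
  have hmap : ∀ (A : Matrix.SpecialLinearGroup (Fin 2) ℤ) i j,
      (Matrix.SpecialLinearGroup.map (n := Fin 2) (Int.castRingHom (ZMod M)) A) i j
        = ((A i j : ℤ) : ZMod M) := fun A i j => rfl
  refine (hmap _ i j).trans ?_
  fin_cases i <;> fin_cases j <;>
    simp only [Fin.zero_eta, Fin.mk_one, Matrix.SpecialLinearGroup.coe_mk, Matrix.cons_val', Matrix.cons_val_zero,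
      Matrix.cons_val_one, Matrix.head_cons, Matrix.empty_val', Matrix.cons_val_fin_one,
      Matrix.head_fin_const, Matrix.of_apply]
  · rw [← hcast 0 0]; exact entry _ _ (dvd_sub_comm.mp k00)
  · rw [← hcast 0 1]; exact entry _ _ (dvd_sub_comm.mp k01)
  · rw [← hcast 1 0]; exact entry _ _ (dvd_sub_comm.mp ⟨kc, hkc⟩)
  · rw [← hcast 1 1]; exact entry _ _ (dvd_sub_comm.mp ⟨kd, hkd⟩)

noncomputable def projP (p : Nat.Primes) : Zhat →+* ℤ_[(p : ℕ)] :=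
  Pi.evalRingHom (fun q : Nat.Primes => ℤ_[(q : ℕ)]) p

lemma projP_apply (p : Nat.Primes) (x : Zhat) : projP p x = x p := rfl

lemma exists_phi (N' : ℕ) (hN' : 0 < N') :
    ∃ Φ : Zhat →+* ZMod N', Function.Surjective Φ ∧ (∀ x : Zhat, Φ x = 0 ↔ (N' : Zhat) ∣ x) ∧
      Function.Surjective (Matrix.GeneralLinearGroup.map (n := Fin 2) Φ) := by
  classical
  have hN'0 : N' ≠ 0 := hN'.ne'
  set s := N'.primeFactors with hs
  let P : s → Nat.Primes := fun i => ⟨(i : ℕ), Nat.prime_of_mem_primeFactors i.2⟩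
  haveI : ∀ i : s, Fact (Nat.Prime (i : ℕ)) := fun i => ⟨Nat.prime_of_mem_primeFactors i.2⟩
  let a : s → ℕ := fun i => (i : ℕ) ^ N'.factorization (i : ℕ)
  have ha1 : ∀ i : s, N'.factorization (i : ℕ) ≠ 0 := fun i =>
    ((Nat.prime_of_mem_primeFactors i.2).factorization_pos_of_dvd hN'0
      (Nat.dvd_of_mem_primeFactors i.2)).ne'
  haveI hane : ∀ i : s, NeZero (a i) := fun i =>
    ⟨pow_ne_zero _ (Nat.prime_of_mem_primeFactors i.2).ne_zero⟩
  have hcop : Pairwise (Function.onFun Nat.Coprime a) := by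
    intro i j hij
    exact Nat.Coprime.pow _ _ ((Nat.coprime_primes (P i).2 (P j).2).mpr
      (fun h => hij (Subtype.ext h)))
  have hprod : ∏ i : s, a i = N' := by
    have h1 : ∏ i : s, a i = ∏ p ∈ s, p ^ N'.factorization p :=
      Finset.prod_coe_sort s (fun p => p ^ N'.factorization p)
    rw [h1]
    have h2 := Nat.factorization_prod_pow_eq_self hN'0
    rwa [Finsupp.prod, Nat.support_factorization] at h2
  let ψ : ZMod N' ≃+* ∀ i : s, ZMod (a i) := hprod ▸ ZMod.prodEquivPi a hcop
  let Φ0 : Zhat →+* ∀ i : s, ZMod (a i) :=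
    Pi.ringHom fun i => (PadicInt.toZModPow (N'.factorization (i : ℕ))).comp (projP (P i))
  let Φ : Zhat →+* ZMod N' := ((ψ.symm : (∀ i : s, ZMod (a i)) ≃+* ZMod N') :
      (∀ i : s, ZMod (a i)) →+* ZMod N').comp Φ0
  have hΦ0ap : ∀ (x : Zhat) (i : s),
      Φ0 x i = PadicInt.toZModPow (N'.factorization (i : ℕ)) (x (P i)) := fun x i => rfl
  have hΦap : ∀ x : Zhat, Φ x = ψ.symm (Φ0 x) := fun x => rfl
  -- surjectivity of Φ0
  have hΦ0surj : Function.Surjective Φ0 := by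
    intro y
    refine ⟨(show Zhat from fun p => if h : (p : ℕ) ∈ s then (((y ⟨(p : ℕ), h⟩).val : ℕ) : ℤ_[(p : ℕ)]) else 0), ?_⟩
    funext i
    rw [hΦ0ap]
    have h : ((P i : Nat.Primes) : ℕ) ∈ s := i.2
    rw [dif_pos h]
    have hi : (⟨((P i : Nat.Primes) : ℕ), h⟩ : s) = i := Subtype.ext rfl
    rw [hi, map_natCast]
    exact ZMod.natCast_rightInverse (y i)
  have hΦsurj : Function.Surjective Φ := fun y => by
    obtain ⟨x, hx⟩ := hΦ0surj (ψ y)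
    exact ⟨x, by rw [hΦap, hx, RingEquiv.symm_apply_apply]⟩
  -- kernel characterization
  have hΦ0ker : ∀ x : Zhat, Φ0 x = 0 ↔
      ∀ i : s, (((i : ℕ) : ℤ_[((P i : Nat.Primes) : ℕ)]) ^ (N'.factorization (i : ℕ))) ∣ x (P i) := by
    intro x
    rw [funext_iff]
    refine forall_congr' fun i => ?_
    rw [hΦ0ap]
    have h0 : (0 : ∀ i : s, ZMod (a i)) i = 0 := rfl
    rw [h0, ← RingHom.mem_ker, PadicInt.ker_toZModPow, Ideal.mem_span_singleton]
  have hNdvd_comp : ∀ x : Zhat,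
      (∀ i : s, (((i : ℕ) : ℤ_[((P i : Nat.Primes) : ℕ)]) ^ (N'.factorization (i : ℕ))) ∣ x (P i))
        ↔ (N' : Zhat) ∣ x := by
    intro x
    constructor
    · intro h
      have hcomp : ∀ p : Nat.Primes, ((N' : ℕ) : ℤ_[(p : ℕ)]) ∣ x p := by
        intro p
        by_cases hp : (p : ℕ) ∈ s
        · have hmain : (((p : ℕ) : ℤ_[(p : ℕ)]) ^ (N'.factorization (p : ℕ))) ∣ x p :=
            h ⟨(p : ℕ), hp⟩
          obtain ⟨z, hz⟩ := hmain
          set e : ℕ := N'.factorization (p : ℕ) with he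
          have hm : ¬ (p : ℕ) ∣ N' / (p : ℕ) ^ e := Nat.not_dvd_ordCompl p.2 hN'0
          have hu := isUnit_padic_natCast_of_not_dvd (p : ℕ) hm
          have hfac : ((p : ℕ) : ℤ_[(p : ℕ)]) ^ e * ((N' / (p : ℕ) ^ e : ℕ) : ℤ_[(p : ℕ)])
              = ((N' : ℕ) : ℤ_[(p : ℕ)]) := by
            rw [← Nat.cast_pow, ← Nat.cast_mul, Nat.ordProj_mul_ordCompl_eq_self]
          refine ⟨(hu.unit⁻¹ : _) * z, ?_⟩
          rw [← hfac, hz]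
          have hmu : ((N' / (p : ℕ) ^ e : ℕ) : ℤ_[(p : ℕ)]) * (hu.unit⁻¹ : _) = 1 :=
            hu.mul_val_inv
          calc ((p : ℕ) : ℤ_[(p : ℕ)]) ^ e * z
              = ((p : ℕ) : ℤ_[(p : ℕ)]) ^ e
                  * ((((N' / (p : ℕ) ^ e : ℕ) : ℤ_[(p : ℕ)]) * (hu.unit⁻¹ : _)) * z) := by
                rw [hmu, one_mul]
            _ = ((p : ℕ) : ℤ_[(p : ℕ)]) ^ e * ((N' / (p : ℕ) ^ e : ℕ) : ℤ_[(p : ℕ)])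
                  * ((hu.unit⁻¹ : _) * z) := by ring
        · have hu : IsUnit ((N' : ℕ) : ℤ_[(p : ℕ)]) :=
            isUnit_padic_natCast_of_not_dvd (p : ℕ)
              (fun hd => hp (Nat.mem_primeFactors.mpr ⟨p.2, hd, hN'0⟩))
          exact hu.dvd
      choose y hy using hcomp
      refine ⟨(show Zhat from fun p => y p), funext fun p => ?_⟩
      have h1 : ((N' : Zhat) * (show Zhat from fun p => y p)) p
          = (N' : Zhat) p * y p := rfl
      have h2 : (N' : Zhat) p = ((N' : ℕ) : ℤ_[(p : ℕ)]) := map_natCast (projP p) N'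
      rw [h1, h2]
      exact hy p
    · rintro ⟨y, rfl⟩ i
      have h1 : ((N' : Zhat) * y) (P i)
          = ((N' : ℕ) : ℤ_[((P i : Nat.Primes) : ℕ)]) * y (P i) := by
        have hm := map_mul (projP (P i)) (N' : Zhat) y
        rw [map_natCast] at hm
        exact hm
      rw [h1]
      have h2 : ((i : ℕ) : ℤ_[((P i : Nat.Primes) : ℕ)]) ^ (N'.factorization (i : ℕ))
          ∣ ((N' : ℕ) : ℤ_[((P i : Nat.Primes) : ℕ)]) := by
        rw [← Nat.cast_pow]
        exact Nat.cast_dvd_cast (Nat.ordProj_dvd N' (i : ℕ))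
      exact h2.mul_right _
  have hΦker : ∀ x : Zhat, Φ x = 0 ↔ (N' : Zhat) ∣ x := by
    intro x
    rw [hΦap, map_eq_zero_iff _ ψ.symm.injective, hΦ0ker, hNdvd_comp]
  refine ⟨Φ, hΦsurj, hΦker, ?_⟩
  -- GL₂ surjectivity
  intro g
  have hC : ∀ i j : Fin 2, ∃ z : Zhat, Φ z = (g : Matrix (Fin 2) (Fin 2) (ZMod N')) i j :=
    fun i j => hΦsurj _
  choose C hCspec using hC
  set Mx : Matrix (Fin 2) (Fin 2) Zhat := Matrix.of fun i j =>
    (show Zhat from fun p =>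
      if (p : ℕ) ∈ s then C i j p else (1 : Matrix (Fin 2) (Fin 2) ℤ_[(p : ℕ)]) i j) with hMx
  have hagree : ∀ i j, Φ (Mx i j) = Φ (C i j) := by
    intro i j
    rw [hΦap, hΦap]
    congr 1
    funext i'
    rw [hΦ0ap, hΦ0ap]
    congr 1
    show (if ((P i' : Nat.Primes) : ℕ) ∈ s then C i j (P i') else _) = C i j (P i')
    rw [if_pos i'.2]
  have hMxmap : ∀ i j, Φ (Mx i j) = (g : Matrix (Fin 2) (Fin 2) (ZMod N')) i j := by
    intro i j; rw [hagree, hCspec]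
  have hMapMx : Mx.map Φ = (g : Matrix (Fin 2) (Fin 2) (ZMod N')) := by
    ext i j
    exact hMxmap i j
  -- componentwise determinant is a unit
  have hdetcomp : ∀ p : Nat.Primes, Mx.det p = (Matrix.of fun i j => Mx i j p).det := by
    intro p
    have h := RingHom.map_det (projP p) Mx
    rw [projP_apply] at h
    rw [h, RingHom.mapMatrix_apply]
    congr 1
  have hgdet : IsUnit ((g : Matrix (Fin 2) (Fin 2) (ZMod N')).det) :=
    ⟨Matrix.GeneralLinearGroup.det g, Matrix.GeneralLinearGroup.val_det_apply g⟩
  have hΦdet : Φ Mx.det = (g : Matrix (Fin 2) (Fin 2) (ZMod N')).det := by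
    rw [RingHom.map_det, RingHom.mapMatrix_apply, hMapMx]
  have hunits : ∀ p : Nat.Primes, IsUnit (Mx.det p) := by
    intro p
    by_cases hp : (p : ℕ) ∈ s
    · have h1 : IsUnit (Φ0 Mx.det) := by
        have h2 : IsUnit (Φ Mx.det) := hΦdet ▸ hgdet
        have h3 := h2.map ψ
        rwa [hΦap, RingEquiv.apply_symm_apply] at h3
      have h4 := h1.map (Pi.evalRingHom (fun i : s => ZMod (a i)) ⟨(p : ℕ), hp⟩)
      have h5 : IsUnit (PadicInt.toZModPow (N'.factorization (p : ℕ)) (Mx.det p)) := h4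
      exact isUnit_of_isUnit_toZModPow (p : ℕ) (ha1 ⟨(p : ℕ), hp⟩) h5
    · have h1 : (Matrix.of fun i j => Mx i j p) = (1 : Matrix (Fin 2) (Fin 2) ℤ_[(p : ℕ)]) := by
        ext i j
        show (if (p : ℕ) ∈ s then C i j p else _) = _
        rw [if_neg hp]
      rw [hdetcomp, h1, Matrix.det_one]
      exact isUnit_one
  have hdet : IsUnit Mx.det := by
    refine ⟨⟨Mx.det, show Zhat from fun p => ((hunits p).unit⁻¹ : _), funext fun p => ?_,
      funext fun p => ?_⟩, rfl⟩
    · show Mx.det p * ((hunits p).unit⁻¹ : _) = 1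
      exact (hunits p).mul_val_inv
    · show ((hunits p).unit⁻¹ : _) * Mx.det p = 1
      exact (hunits p).val_inv_mul
  have hU : IsUnit Mx := (Matrix.isUnit_iff_isUnit_det Mx).mpr hdet
  refine ⟨hU.unit, Units.ext ?_⟩
  have hval : ((Matrix.GeneralLinearGroup.map (n := Fin 2) Φ) hU.unit :
      Matrix (Fin 2) (Fin 2) (ZMod N'))
      = Φ.mapMatrix (hU.unit : Matrix (Fin 2) (Fin 2) Zhat) := rfl
  rw [hval, hU.unit_spec, RingHom.mapMatrix_apply, hMapMx]

lemma card_U0_zmod (N N' : ℕ) [NeZero N] [NeZero N'] (hdvd : N ∣ N') :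
    Nat.card ↥(U0Subgroup (ZMod N') ((N : ℕ) : ZMod N')) =
      N'.totient * N.totient *
        Nat.card ↥((Gamma1 N).map
          (Matrix.SpecialLinearGroup.map (n := Fin 2) (Int.castRingHom (ZMod N')))) := by
  classical
  set R := ZMod N'
  set castN := ZMod.castHom hdvd (ZMod N) with hcastN
  set G0 := U0Subgroup R ((N : ℕ) : R) with hG0
  -- entry (0,0) of an element of G0 is a unit mod N
  have hAunit : ∀ g : ↥G0, IsUnit (castN ((g.1 : Matrix (Fin 2) (Fin 2) R) 0 0)) := by
    intro g
    have hd : IsUnit ((g.1 : Matrix (Fin 2) (Fin 2) R).det) :=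
      ⟨Matrix.GeneralLinearGroup.det g.1, Matrix.GeneralLinearGroup.val_det_apply g.1⟩
    have hc : castN ((g.1 : Matrix (Fin 2) (Fin 2) R) 1 0) = 0 :=
      (zmod_dvd_iff_castHom_eq_zero hdvd _).mp g.2
    have h1 : IsUnit (castN ((g.1 : Matrix (Fin 2) (Fin 2) R).det)) := hd.map castN
    rw [Matrix.det_fin_two, map_sub, map_mul, map_mul, hc, mul_zero, sub_zero] at h1
    exact isUnit_of_mul_isUnit_left h1
  have hc0 : ∀ g : ↥G0, castN ((g.1 : Matrix (Fin 2) (Fin 2) R) 1 0) = 0 := fun g =>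
    (zmod_dvd_iff_castHom_eq_zero hdvd _).mp g.2
  -- the homomorphism (det, a mod N)
  let f : ↥G0 →* (ZMod N')ˣ × (ZMod N)ˣ :=
  { toFun := fun g => (Matrix.GeneralLinearGroup.det g.1, (hAunit g).unit)
    map_one' := by
      refine Prod.ext (map_one _) (Units.ext ?_)
      show castN (((1 : ↥G0).1 : Matrix (Fin 2) (Fin 2) R) 0 0) = 1
      have : ((1 : ↥G0).1 : Matrix (Fin 2) (Fin 2) R) = 1 := rfl
      rw [this, Matrix.one_apply_eq, map_one]
    map_mul' := by
      intro x y
      refine Prod.ext (map_mul _ _ _) (Units.ext ?_)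
      show castN (((x * y).1 : Matrix (Fin 2) (Fin 2) R) 0 0)
        = castN ((x.1 : Matrix (Fin 2) (Fin 2) R) 0 0) * castN ((y.1 : Matrix (Fin 2) (Fin 2) R) 0 0)
      have h1 : ((x * y).1 : Matrix (Fin 2) (Fin 2) R)
          = (x.1 : Matrix (Fin 2) (Fin 2) R) * (y.1 : Matrix (Fin 2) (Fin 2) R) := rfl
      rw [h1, Matrix.mul_apply, Fin.sum_univ_two, map_add, map_mul, map_mul, hc0 y,
        mul_zero, add_zero] }
  have hfdet : ∀ g : ↥G0, (f g).1 = Matrix.GeneralLinearGroup.det g.1 := fun g => rfl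
  have hfa : ∀ g : ↥G0, ((f g).2 : ZMod N) = castN ((g.1 : Matrix (Fin 2) (Fin 2) R) 0 0) :=
    fun g => rfl
  -- surjectivity of f
  have hfsurj : Function.Surjective f := by
    rintro ⟨u, v⟩
    obtain ⟨w, hw⟩ := ZMod.unitsMap_surjective hdvd v
    set A : Matrix (Fin 2) (Fin 2) R := !![(w : R), 0; 0, (w⁻¹ : (ZMod N')ˣ) * (u : R)] with hA
    have hAdet : A.det = (u : R) := by
      rw [hA, Matrix.det_fin_two_of]
      simp only [mul_zero, sub_zero]
      rw [← mul_assoc, Units.mul_inv, one_mul]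
    have hAu : IsUnit A := by
      rw [Matrix.isUnit_iff_isUnit_det, hAdet]
      exact u.isUnit
    have hmem : hAu.unit ∈ G0 := by
      show ((N : ℕ) : R) ∣ (hAu.unit : Matrix (Fin 2) (Fin 2) R) 1 0
      rw [hAu.unit_spec, hA]
      show ((N : ℕ) : R) ∣ 0
      exact dvd_zero _
    refine ⟨⟨hAu.unit, hmem⟩, Prod.ext (Units.ext ?_) (Units.ext ?_)⟩
    · show (Matrix.GeneralLinearGroup.det (⟨hAu.unit, hmem⟩ : ↥G0).1 : R) = (u : R)
      rw [Matrix.GeneralLinearGroup.val_det_apply]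
      show ((hAu.unit : Matrix (Fin 2) (Fin 2) R)).det = (u : R)
      rw [hAu.unit_spec, hAdet]
    · rw [hfa]
      show castN ((hAu.unit : Matrix (Fin 2) (Fin 2) R) 0 0) = (v : ZMod N)
      rw [hAu.unit_spec, hA]
      show castN (w : R) = (v : ZMod N)
      rw [← hw]
      rfl
  -- the kernel is in bijection with the image of Γ₁(N)
  set SLm := Matrix.SpecialLinearGroup.map (n := Fin 2) (Int.castRingHom (ZMod N')) with hSLm
  set S' := (Gamma1 N).map SLm with hS'
  have hmemS' : ∀ t : Matrix.SpecialLinearGroup (Fin 2) R, t ∈ S' ↔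
      (castN ((t : Matrix (Fin 2) (Fin 2) R) 0 0) = 1 ∧
       castN ((t : Matrix (Fin 2) (Fin 2) R) 1 1) = 1 ∧
       castN ((t : Matrix (Fin 2) (Fin 2) R) 1 0) = 0) := by
    intro t
    rw [hS', Subgroup.mem_map]
    constructor
    · rintro ⟨γ, hγ, rfl⟩
      rw [Gamma1_mem] at hγ
      have he : ∀ i j, castN ((SLm γ : Matrix (Fin 2) (Fin 2) R) i j) = ((γ i j : ℤ) : ZMod N) := by
        intro i j
        show castN (((γ i j : ℤ) : R)) = _
        rw [map_intCast]
      rw [he 0 0, he 1 1, he 1 0]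
      exact ⟨hγ.1, hγ.2.1, hγ.2.2⟩
    · rintro ⟨h1, h2, h3⟩
      obtain ⟨γ, hγ⟩ := SL2_map_zmod_surjective N' t
      refine ⟨γ, ?_, hγ⟩
      rw [Gamma1_mem N γ]
      have he : ∀ i j, ((γ i j : ℤ) : ZMod N) = castN ((t : Matrix (Fin 2) (Fin 2) R) i j) := by
        intro i j
        rw [← hγ]
        show _ = castN (((γ i j : ℤ) : R))
        rw [map_intCast]
      exact ⟨(he 0 0).trans h1, (he 1 1).trans h2, (he 1 0).trans h3⟩
  -- the bijection between ker f and S'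
  have hdet1 : ∀ x : ↥f.ker, ((x.1.1 : Matrix (Fin 2) (Fin 2) R)).det = 1 := by
    intro x
    have h1 : f x.1 = 1 := x.2
    have h2 : Matrix.GeneralLinearGroup.det x.1.1 = 1 := by
      rw [← hfdet]
      exact congrArg Prod.fst h1
    have h3 := congrArg Units.val h2
    rwa [Matrix.GeneralLinearGroup.val_det_apply] at h3
  have ha1 : ∀ x : ↥f.ker, castN ((x.1.1 : Matrix (Fin 2) (Fin 2) R) 0 0) = 1 := by
    intro x
    have h1 : f x.1 = 1 := x.2
    have h2 := congrArg Units.val (congrArg Prod.snd h1)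
    rw [hfa] at h2
    exact h2
  have hd1 : ∀ x : ↥f.ker, castN ((x.1.1 : Matrix (Fin 2) (Fin 2) R) 1 1) = 1 := by
    intro x
    have h1 := congrArg castN (hdet1 x)
    rw [Matrix.det_fin_two, map_sub, map_mul, map_mul, hc0 x.1, mul_zero, sub_zero,
      ha1 x, one_mul, map_one] at h1
    exact h1
  -- the equivalence
  let E : ↥f.ker ≃ ↥S' :=
  { toFun := fun x => ⟨⟨(x.1.1 : Matrix (Fin 2) (Fin 2) R), hdet1 x⟩, by
      refine (hmemS' _).mpr ?_
      exact ⟨ha1 x, hd1 x, hc0 x.1⟩⟩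
    invFun := fun t => by
      refine ⟨⟨Matrix.SpecialLinearGroup.toGL t.1, ?_⟩, ?_⟩
      · show ((N : ℕ) : R) ∣ (t.1 : Matrix (Fin 2) (Fin 2) R) 1 0
        rw [zmod_dvd_iff_castHom_eq_zero hdvd]
        exact ((hmemS' t.1).mp t.2).2.2
      · rw [MonoidHom.mem_ker]
        refine Prod.ext (Units.ext ?_) (Units.ext ?_)
        · rw [hfdet]
          show ((Matrix.SpecialLinearGroup.toGL t.1 : GL (Fin 2) R) :
            Matrix (Fin 2) (Fin 2) R).det = 1
          exact t.1.2
        · rw [hfa]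
          exact ((hmemS' t.1).mp t.2).1
    left_inv := fun x => Subtype.ext (Subtype.ext (Units.ext rfl))
    right_inv := fun t => Subtype.ext (Subtype.ext rfl) }
  -- counting
  haveI : Finite ↥G0 := Subtype.finite
  have hcount := Subgroup.index_mul_card (f.ker)
  have hindex : (f.ker).index = Nat.card ((ZMod N')ˣ × (ZMod N)ˣ) := by
    rw [Subgroup.index_ker]
    have : f.range = ⊤ := MonoidHom.range_eq_top.mpr hfsurj
    rw [this]
    exact Nat.card_congr Subgroup.topEquiv.toEquiv
  have hker_card : Nat.card ↥f.ker = Nat.card ↥S' := Nat.card_congr E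
  rw [hindex, hker_card, Nat.card_prod] at hcount
  rw [← hcount]
  have hu1 : Nat.card (ZMod N')ˣ = N'.totient := by
    rw [Nat.card_eq_fintype_card, ZMod.card_units_eq_totient]
  have hu2 : Nat.card (ZMod N)ˣ = N.totient := by
    rw [Nat.card_eq_fintype_card, ZMod.card_units_eq_totient]
  rw [hu1, hu2]

/-- For positive integers `N ∣ N'`, the index of the principal congruence subgroup `U_{N'}`
in `U₀(N)` (inside `GL₂(Ẑ)`) equals `φ(N')·φ(N)·[Γ₁(N) : Γ(N')]`. -/
theorem index_UHat_in_U0Hat (N N' : ℕ) (hN : 0 < N) (hN' : 0 < N') (hdvd : N ∣ N') :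
    (CongSubgroup Zhat (N' : Zhat)).relIndex (U0Subgroup Zhat (N : Zhat)) =
      N'.totient * N.totient * (Gamma N').relIndex (Gamma1 N) := by
  haveI : NeZero N := ⟨hN.ne'⟩
  haveI : NeZero N' := ⟨hN'.ne'⟩
  obtain ⟨Φ, hΦsurj, hΦker, hGLsurj⟩ := exists_phi N' hN'
  set π : GL (Fin 2) Zhat →* GL (Fin 2) (ZMod N') :=
    Matrix.GeneralLinearGroup.map (n := Fin 2) Φ with hπ
  have hπval : ∀ u : GL (Fin 2) Zhat,
      (π u : Matrix (Fin 2) (Fin 2) (ZMod N'))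
        = (u : Matrix (Fin 2) (Fin 2) Zhat).map Φ := fun u => rfl
  -- transfer of divisibility by N
  have hNdvd : ∀ x : Zhat, (N : Zhat) ∣ x ↔ ((N : ℕ) : ZMod N') ∣ Φ x := by
    intro x
    constructor
    · rintro ⟨y, rfl⟩
      refine ⟨Φ y, ?_⟩
      rw [map_mul]
      congr 1
      exact map_natCast Φ N
    · rintro ⟨w, hw⟩
      obtain ⟨z, rfl⟩ := hΦsurj w
      have h0 : Φ (x - (N : Zhat) * z) = 0 := by
        rw [map_sub, map_mul, map_natCast, hw, sub_self]
      have h1 : (N' : Zhat) ∣ x - (N : Zhat) * z := (hΦker _).mp h0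
      have h2 : (N : Zhat) ∣ (N' : Zhat) := by
        exact_mod_cast Nat.cast_dvd_cast (α := Zhat) hdvd
      have h3 : (N : Zhat) ∣ x - (N : Zhat) * z := h2.trans h1
      have h4 : (N : Zhat) ∣ (N : Zhat) * z := Dvd.intro z rfl
      have := dvd_add h3 h4
      rwa [sub_add_cancel] at this
  -- the congruence subgroup is the kernel of π
  have hker_eq : CongSubgroup Zhat (N' : Zhat) = π.ker := by
    ext u
    show (∀ i j, (N' : Zhat) ∣ ((↑u : Matrix (Fin 2) (Fin 2) Zhat) - 1) i j) ↔ _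
    rw [MonoidHom.mem_ker]
    constructor
    · intro h
      apply Units.ext
      rw [hπval, Units.val_one]
      have hz : ((↑u : Matrix (Fin 2) (Fin 2) Zhat) - 1).map Φ = 0 := by
        ext i j
        show Φ (((↑u : Matrix (Fin 2) (Fin 2) Zhat) - 1) i j) = 0
        exact (hΦker _).mpr (h i j)
      have hz' : Φ.mapMatrix ((↑u : Matrix (Fin 2) (Fin 2) Zhat) - 1) = 0 := by
        rw [RingHom.mapMatrix_apply]; exact hz
      rw [map_sub, map_one, sub_eq_zero] at hz'
      rw [← RingHom.mapMatrix_apply]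
      exact hz'
    · intro h i j
      have h1 : ((↑u : Matrix (Fin 2) (Fin 2) Zhat) - 1).map Φ = 0 := by
        have h2 : (↑u : Matrix (Fin 2) (Fin 2) Zhat).map Φ = 1 := by
          rw [← hπval, h, Units.val_one]
        rw [← RingHom.mapMatrix_apply, map_sub, map_one, RingHom.mapMatrix_apply, h2, sub_self]
      apply (hΦker _).mp
      have := congrFun (congrFun h1 i) j
      exact this
  -- U₀(N) is the preimage of U₀(N mod N')
  have hU0_eq : U0Subgroup Zhat (N : Zhat)
      = (U0Subgroup (ZMod N') ((N : ℕ) : ZMod N')).comap π := by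
    ext u
    show (N : Zhat) ∣ (↑u : Matrix (Fin 2) (Fin 2) Zhat) 1 0 ↔ _
    rw [hNdvd]
    rfl
  rw [hker_eq, hU0_eq, Subgroup.relIndex_ker,
    Subgroup.map_comap_eq_self_of_surjective hGLsurj]
  have hGamma : Gamma N' = (Matrix.SpecialLinearGroup.map (n := Fin 2)
      (Int.castRingHom (ZMod N'))).ker := rfl
  rw [hGamma, Subgroup.relIndex_ker]
  exact card_U0_zmod N N' hdvd
end
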